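/- arXiv:2305.10286 — 9 statements merged into one kernel-verified Lean document; each statement's English description precedes it below -/
import Mathlib

section
/- A distribution δ is in equilibrium if and only if it admits a decomposition (δ_i)_{i∈N} with ∑_i δ_i(x) = δ(x) for each charity x and ∑_x δ_i(x) = C_i for each agent i, such that δ_i(x) = 0 for every charity x that is not critical for agent i in δ. -/
/-!
If agent `i` gives a positive amount to a charity `x₀` that is not critical for it, moving a
small amount `ε` from `x₀` to the critical charities, split proportionally to `v i`, raises every
critical ratio by `ε / V` while keeping all other ratios above the current utility, so `i` has a
profitable deviation. Conversely, if agent `i` only funds critical charities, a deviation raising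
its utility would have to raise each critical charity strictly above its current own share, which
exceeds the budget `C i` already spent on them.
-/

open Finset

/-- Leontief utility: minimum of `δ x / v x` over charities with positive weight. -/
noncomputable def leontief {A : Type*} [Fintype A] (v : A → ℝ)
    (h : (Finset.univ.filter fun x => 0 < v x).Nonempty) (δ : A → ℝ) : ℝ :=
  (Finset.univ.filter fun x => 0 < v x).inf' h fun x => δ x / v x

namespace Leontief

variable {A : Type*} [Fintype A] {v : A → ℝ} {h : (univ.filter fun x => 0 < v x).Nonempty}
  {δ : A → ℝ}

def IsCritical (v : A → ℝ) (h : (univ.filter fun x => 0 < v x).Nonempty) (δ : A → ℝ) (x : A) :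
    Prop :=
  0 < v x ∧ δ x / v x = leontief v h δ

def IsBestResponse (v : A → ℝ) (h : (univ.filter fun x => 0 < v x).Nonempty) (δ d : A → ℝ) :
    Prop :=
  ∀ d' : A → ℝ, 0 ≤ d' → ∑ x, d' x = ∑ x, d x → leontief v h (δ - d + d') ≤ leontief v h δ

theorem leontief_le_div {x : A} (hx : 0 < v x) : leontief v h δ ≤ δ x / v x :=
  inf'_le _ (by simpa using hx)

theorem lt_leontief_iff {c : ℝ} : c < leontief v h δ ↔ ∀ x, 0 < v x → c < δ x / v x := by
  simp [leontief, lt_inf'_iff]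

theorem exists_isCritical : ∃ x, IsCritical v h δ x := by
  obtain ⟨x, hx, hmin⟩ := exists_mem_eq_inf' h fun x => δ x / v x
  exact ⟨x, (mem_filter.1 hx).2, hmin.symm⟩

theorem filter_isCritical_nonempty [DecidablePred (IsCritical v h δ)] :
    (univ.filter (IsCritical v h δ)).Nonempty :=
  let ⟨x, hx⟩ := exists_isCritical (h := h) (δ := δ); ⟨x, by simpa using hx⟩

theorem IsCritical.leontief_mul_eq {x : A} (hx : IsCritical v h δ x) :
    leontief v h δ * v x = δ x :=
  ((div_eq_iff hx.1.ne').1 hx.2).symm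

theorem leontief_mul_lt_of_not_isCritical {x : A} (hx : 0 < v x) (hnc : ¬IsCritical v h δ x) :
    leontief v h δ * v x < δ x :=
  (lt_div_iff₀ hx).1 <| (leontief_le_div hx).lt_of_ne fun heq => hnc ⟨hx, heq.symm⟩

theorem leontief_sub_add_le_of_forall_not_isCritical {d d' : A → ℝ} (hd' : 0 ≤ d')
    (hsum : ∑ x, d' x = ∑ x, d x) (hd : ∀ x, ¬IsCritical v h δ x → d x = 0) :
    leontief v h (δ - d + d') ≤ leontief v h δ := by
  classical
  by_contra! hlt
  set S := univ.filter (IsCritical v h δ)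
  have hgrow : ∀ x ∈ S, d x < d' x := fun x hx => by
    have hcrit : IsCritical v h δ x := (mem_filter.1 hx).2
    have := (lt_div_iff₀ hcrit.1).1 (lt_leontief_iff.1 hlt x hcrit.1)
    simp only [Pi.add_apply, Pi.sub_apply, hcrit.leontief_mul_eq] at this
    linarith
  have hdS : ∑ x ∈ S, d x = ∑ x, d x :=
    sum_subset (subset_univ S) fun x _ hx => hd x fun hcrit => hx (by simpa [S])
  refine lt_irrefl (∑ x, d x) ?_
  calc ∑ x, d x = ∑ x ∈ S, d x := hdS.symm
    _ < ∑ x ∈ S, d' x := sum_lt_sum_of_nonempty filter_isCritical_nonempty hgrow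
    _ ≤ ∑ x, d' x := sum_le_sum_of_subset_of_nonneg (subset_univ S) fun x _ _ => hd' x
    _ = ∑ x, d x := hsum

theorem exists_small_shift {d : A → ℝ} {x₀ : A} (hx₀ : ¬IsCritical v h δ x₀) (hd : 0 < d x₀) :
    ∃ ε, 0 < ε ∧ ε ≤ d x₀ ∧ (0 < v x₀ → leontief v h δ * v x₀ < δ x₀ - ε) := by
  by_cases hv : 0 < v x₀
  · have hgap := leontief_mul_lt_of_not_isCritical hv hx₀
    refine ⟨min (d x₀) ((δ x₀ - leontief v h δ * v x₀) / 2), lt_min hd (by linarith),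
      min_le_left _ _, fun _ => ?_⟩
    linarith [min_le_right (d x₀) ((δ x₀ - leontief v h δ * v x₀) / 2)]
  · exact ⟨d x₀, hd, le_rfl, fun h => absurd h hv⟩

theorem exists_leontief_lt_of_not_isCritical {d : A → ℝ} (hd : 0 ≤ d) {x₀ : A}
    (hx₀ : ¬IsCritical v h δ x₀) (hdx₀ : 0 < d x₀) :
    ∃ d' : A → ℝ, 0 ≤ d' ∧ ∑ x, d' x = ∑ x, d x ∧
      leontief v h δ < leontief v h (δ - d + d') := by
  classical
  set S := univ.filter (IsCritical v h δ)
  obtain ⟨ε, hε, hεd, hεgap⟩ := exists_small_shift hx₀ hdx₀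
  set V := ∑ x ∈ S, v x
  have hV : 0 < V := sum_pos (fun x hx => (mem_filter.1 hx).2.1) filter_isCritical_nonempty
  set w : A → ℝ := fun x => if x ∈ S then ε / V * v x else 0
  have hw : ∑ x, w x = ε := by
    rw [sum_ite_mem, univ_inter, ← mul_sum, div_mul_cancel₀ _ hV.ne']
  have hwx₀ : w x₀ = 0 := if_neg fun hx => hx₀ (mem_filter.1 hx).2
  refine ⟨d - Pi.single x₀ ε + w, fun x => ?_, ?_, ?_⟩
  · rcases eq_or_ne x x₀ with rfl | hx
    · simp [hwx₀, hεd]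
    · have : 0 ≤ w x := by
        dsimp only [w]; split_ifs with hS
        exacts [mul_nonneg (div_pos hε hV).le (mem_filter.1 hS).2.1.le, le_rfl]
      simpa [hx] using add_nonneg (hd x) this
  · simp [sum_add_distrib, hw]
  · refine lt_leontief_iff.2 fun x hvx => (lt_div_iff₀ hvx).2 ?_
    have hshift : (δ - d + (d - Pi.single x₀ ε + w) : A → ℝ) x =
        δ x - (Pi.single x₀ ε : A → ℝ) x + w x := by
      simp only [Pi.add_apply, Pi.sub_apply]; ring
    rw [hshift]
    by_cases hxS : x ∈ S
    · have hcrit : IsCritical v h δ x := (mem_filter.1 hxS).2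
      have hx : x ≠ x₀ := fun hx => hx₀ (hx ▸ hcrit)
      have : 0 < ε / V * v x := mul_pos (div_pos hε hV) hvx
      simp only [w, if_pos hxS, Pi.single_eq_of_ne hx, sub_zero, ← hcrit.leontief_mul_eq]
      linarith
    · simp only [w, if_neg hxS, add_zero]
      rcases eq_or_ne x x₀ with rfl | hx
      · simpa using hεgap hvx
      · simpa [hx] using leontief_mul_lt_of_not_isCritical hvx fun hcrit => hxS (by simpa [S])

theorem isBestResponse_iff {d : A → ℝ} (hd : 0 ≤ d) :
    IsBestResponse v h δ d ↔ ∀ x, ¬IsCritical v h δ x → d x = 0 := by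
  refine ⟨fun hbest x hx => ?_, fun hsupp d' hd' hsum =>
    leontief_sub_add_le_of_forall_not_isCritical hd' hsum hsupp⟩
  by_contra hne
  obtain ⟨d', hd', hsum, hlt⟩ :=
    exists_leontief_lt_of_not_isCritical hd hx ((hd x).lt_of_ne (Ne.symm hne))
  exact (hbest d' hd' hsum).not_gt hlt

end Leontief

theorem stmt_5_general {N A : Type*} [Fintype N] [Fintype A]
    (C : N → ℝ)
    (v : N → A → ℝ)
    (hAi : ∀ i, (Finset.univ.filter fun x => 0 < v i x).Nonempty)
    (δ : A → ℝ) :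
    -- δ is in equilibrium:
    (∃ δi : N → A → ℝ, (∀ i x, 0 ≤ δi i x) ∧ (∀ x, ∑ i, δi i x = δ x) ∧
        (∀ i, ∑ x, δi i x = C i) ∧
        (∀ i, ∀ δi' : A → ℝ, (∀ x, 0 ≤ δi' x) → (∑ x, δi' x = C i) →
          leontief (v i) (hAi i) (fun x => δ x - δi i x + δi' x) ≤ leontief (v i) (hAi i) δ))
    ↔
    -- iff it has a decomposition in which each agent contributes only to critical charities:
    (∃ δi : N → A → ℝ, (∀ i x, 0 ≤ δi i x) ∧ (∀ x, ∑ i, δi i x = δ x) ∧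
        (∀ i, ∑ x, δi i x = C i) ∧
        (∀ i x, ¬ (0 < v i x ∧ δ x / v i x = leontief (v i) (hAi i) δ) → δi i x = 0)) := by
  refine exists_congr fun δi => and_congr_right fun hpos => and_congr_right' <|
    and_congr_right fun hsumi => forall_congr' fun i => ?_
  have hbest := Leontief.isBestResponse_iff (h := hAi i) (δ := δ) (d := δi i) (hpos i)
  rw [Leontief.IsBestResponse, hsumi i] at hbest
  exact hbest

theorem stmt_5 {N A : Type*} [Fintype N] [Fintype A]
    (C : N → ℝ) (hC : ∀ i, 0 ≤ C i)
    (v : N → A → ℝ) (hv : ∀ i x, 0 ≤ v i x)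
    (hAi : ∀ i, (Finset.univ.filter fun x => 0 < v i x).Nonempty)
    (δ : A → ℝ) (hδ : ∀ x, 0 ≤ δ x) (hsum : ∑ x, δ x = ∑ i, C i) :
    -- δ is in equilibrium:
    (∃ δi : N → A → ℝ, (∀ i x, 0 ≤ δi i x) ∧ (∀ x, ∑ i, δi i x = δ x) ∧
        (∀ i, ∑ x, δi i x = C i) ∧
        (∀ i, ∀ δi' : A → ℝ, (∀ x, 0 ≤ δi' x) → (∑ x, δi' x = C i) →
          leontief (v i) (hAi i) (fun x => δ x - δi i x + δi' x) ≤ leontief (v i) (hAi i) δ))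
    ↔
    -- iff it has a decomposition in which each agent contributes only to critical charities:
    (∃ δi : N → A → ℝ, (∀ i x, 0 ≤ δi i x) ∧ (∀ x, ∑ i, δi i x = δ x) ∧
        (∀ i, ∑ x, δi i x = C i) ∧
        (∀ i x, ¬ (0 < v i x ∧ δ x / v i x = leontief (v i) (hAi i) δ) → δi i x = 0)) :=
  stmt_5_general C v hAi δ
end

section
/- Every equilibrium distribution is Pareto efficient. -/
open Finset

/-!
At an equilibrium every agent gives only to charities at which her Leontief utility is attained:
otherwise she could move a little money from such a charity to all charities evenly and raise
every ratio `δ x / v x` above the current minimum. Hence if `δ'` gives each agent at least her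
utility under `δ`, then on every charity some agent funds,
`δ x = u_i(δ) v_{i,x} ≤ u_i(δ') v_{i,x} ≤ δ' x`. So `δ ≤ δ'` pointwise, and equal totals force
`δ' = δ`.
-/

section Leontief

variable {A : Type*} [Fintype A] {v : A → ℝ} {h : (univ.filter fun x => 0 < v x).Nonempty}

theorem leontief_mul_le (δ : A → ℝ) {x : A} (hx : 0 < v x) : leontief v h δ * v x ≤ δ x :=
  (le_div_iff₀ hx).mp (inf'_le _ (mem_filter.mpr ⟨mem_univ x, hx⟩))

theorem lt_leontief_of_forall {δ : A → ℝ} {u : ℝ} (hu : ∀ x, 0 < v x → u * v x < δ x) :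
    u < leontief v h δ :=
  (lt_inf'_iff h).mpr fun x hx =>
    (lt_div_iff₀ (mem_filter.mp hx).2).mpr (hu x (mem_filter.mp hx).2)

theorem leontief_lt_of_shift [DecidableEq A] {δ : A → ℝ} {x₀ : A} {ε : ℝ} (hε : 0 < ε)
    (hgap : 0 < v x₀ → leontief v h δ * v x₀ ≤ δ x₀ - ε) :
    leontief v h δ < leontief v h (δ - Pi.single x₀ ε + fun _ => ε / Fintype.card A) := by
  have hshare : 0 < ε / Fintype.card A :=
    div_pos hε (Nat.cast_pos.mpr (Fintype.card_pos_iff.mpr ⟨x₀⟩))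
  refine lt_leontief_of_forall fun x hx => ?_
  simp only [Pi.add_apply, Pi.sub_apply]
  by_cases hxx : x = x₀
  · subst hxx
    rw [Pi.single_eq_same]
    linarith [hgap hx]
  · rw [Pi.single_eq_of_ne hxx]
    linarith [leontief_mul_le (h := h) δ hx]

def IsBestResponse (v : A → ℝ) (h : (univ.filter fun x => 0 < v x).Nonempty)
    (δ d : A → ℝ) : Prop :=
  ∀ d' : A → ℝ, (∀ x, 0 ≤ d' x) → ∑ x, d' x = ∑ x, d x →
    leontief v h (fun x => δ x - d x + d' x) ≤ leontief v h δ

theorem IsBestResponse.tight {δ d : A → ℝ} (hbr : IsBestResponse v h δ d) (hd : ∀ x, 0 ≤ d x)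
    {x₀ : A} (hx₀ : 0 < d x₀) : 0 < v x₀ ∧ δ x₀ = leontief v h δ * v x₀ := by
  classical
  by_contra hslack
  obtain ⟨ε, hε, hεd, hgap⟩ : ∃ ε, 0 < ε ∧ ε ≤ d x₀ ∧
      (0 < v x₀ → leontief v h δ * v x₀ ≤ δ x₀ - ε) := by
    by_cases hv : 0 < v x₀
    · have hpos : 0 < δ x₀ - leontief v h δ * v x₀ :=
        sub_pos.mpr ((leontief_mul_le δ hv).lt_of_ne fun he => hslack ⟨hv, he.symm⟩)
      exact ⟨min (d x₀) (δ x₀ - leontief v h δ * v x₀), lt_min hx₀ hpos, min_le_left _ _,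
        fun _ => by linarith [min_le_right (d x₀) (δ x₀ - leontief v h δ * v x₀)]⟩
    · exact ⟨d x₀, hx₀, le_rfl, fun hv' => absurd hv' hv⟩
  set d' := d - Pi.single x₀ ε + fun _ => ε / Fintype.card A
  have hd' : ∀ x, 0 ≤ d' x := by
    intro x
    have hshare : 0 ≤ ε / Fintype.card A := by positivity
    by_cases hxx : x = x₀
    · subst hxx
      simp only [d', Pi.add_apply, Pi.sub_apply, Pi.single_eq_same]
      linarith
    · simp only [d', Pi.add_apply, Pi.sub_apply, Pi.single_eq_of_ne hxx]
      linarith [hd x]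
  have hsum : ∑ x, d' x = ∑ x, d x := by
    have hcard : (Fintype.card A : ℝ) ≠ 0 :=
      Nat.cast_ne_zero.mpr (Fintype.card_pos_iff.mpr ⟨x₀⟩).ne'
    simp only [d', Pi.add_apply, Pi.sub_apply, sum_add_distrib, sum_sub_distrib,
      sum_pi_single', mem_univ, if_true, sum_const, card_univ, nsmul_eq_mul]
    field_simp
    ring
  have hshift :
      (fun x => δ x - d x + d' x) = δ - Pi.single x₀ ε + fun _ => ε / Fintype.card A := by
    funext x
    simp only [d', Pi.add_apply, Pi.sub_apply]
    ring
  exact (hbr d' hd' hsum).not_gt (hshift ▸ leontief_lt_of_shift hε hgap)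

theorem IsBestResponse.le_of_leontief_le {δ d δ' : A → ℝ} (hbr : IsBestResponse v h δ d)
    (hd : ∀ x, 0 ≤ d x) (hδ' : leontief v h δ ≤ leontief v h δ') {x : A} (hx : 0 < d x) :
    δ x ≤ δ' x := by
  obtain ⟨hv, hδx⟩ := hbr.tight hd hx
  calc δ x = leontief v h δ * v x := hδx
    _ ≤ leontief v h δ' * v x := mul_le_mul_of_nonneg_right hδ' hv.le
    _ ≤ δ' x := leontief_mul_le δ' hv

end Leontief

theorem stmt_6_general {N A : Type*} [Fintype N] [Fintype A]
    (C : N → ℝ)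
    (v : N → A → ℝ)
    (hAi : ∀ i, (Finset.univ.filter fun x => 0 < v i x).Nonempty)
    (δ : A → ℝ) (hsum : ∑ x, δ x = ∑ i, C i)
    -- δ is in equilibrium:
    (heq : ∃ δi : N → A → ℝ, (∀ i x, 0 ≤ δi i x) ∧ (∀ x, ∑ i, δi i x = δ x) ∧
        (∀ i, ∑ x, δi i x = C i) ∧
        (∀ i, ∀ δi' : A → ℝ, (∀ x, 0 ≤ δi' x) → (∑ x, δi' x = C i) →
          leontief (v i) (hAi i) (fun x => δ x - δi i x + δi' x) ≤ leontief (v i) (hAi i) δ)) :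
    -- then δ is Pareto efficient:
    ¬ ∃ δ' : A → ℝ, (∀ x, 0 ≤ δ' x) ∧ (∑ x, δ' x = ∑ i, C i) ∧
        (∀ i, leontief (v i) (hAi i) δ ≤ leontief (v i) (hAi i) δ') ∧
        (∃ i, leontief (v i) (hAi i) δ < leontief (v i) (hAi i) δ') := by
  rintro ⟨δ', hδ'0, hδ'sum, hge, i₀, hlt⟩
  obtain ⟨δi, hδi0, hδiδ, hδiC, hbr⟩ := heq
  have hbr' : ∀ i, IsBestResponse (v i) (hAi i) δ (δi i) :=
    fun i d' hd' hsum' => hbr i d' hd' (hsum'.trans (hδiC i))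
  have hle : ∀ x, δ x ≤ δ' x := by
    intro x
    by_contra! hx
    have hpos : ∑ _i : N, (0 : ℝ) < ∑ i, δi i x := by
      rw [sum_const_zero, hδiδ x]
      linarith [hδ'0 x]
    obtain ⟨i, -, hi⟩ := exists_lt_of_sum_lt hpos
    exact hx.not_ge ((hbr' i).le_of_leontief_le (hδi0 i) (hge i) hi)
  have hδ'δ : δ' = δ := funext fun x =>
    (((sum_eq_sum_iff_of_le fun x _ => hle x).mp (hsum.trans hδ'sum.symm)) x (mem_univ x)).symm
  exact hlt.ne (by rw [hδ'δ])

theorem stmt_6 {N A : Type*} [Fintype N] [Fintype A]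
    (C : N → ℝ) (hC : ∀ i, 0 ≤ C i)
    (v : N → A → ℝ) (hv : ∀ i x, 0 ≤ v i x)
    (hAi : ∀ i, (Finset.univ.filter fun x => 0 < v i x).Nonempty)
    (δ : A → ℝ) (hδ : ∀ x, 0 ≤ δ x) (hsum : ∑ x, δ x = ∑ i, C i)
    -- δ is in equilibrium:
    (heq : ∃ δi : N → A → ℝ, (∀ i x, 0 ≤ δi i x) ∧ (∀ x, ∑ i, δi i x = δ x) ∧
        (∀ i, ∑ x, δi i x = C i) ∧
        (∀ i, ∀ δi' : A → ℝ, (∀ x, 0 ≤ δi' x) → (∑ x, δi' x = C i) →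
          leontief (v i) (hAi i) (fun x => δ x - δi i x + δi' x) ≤ leontief (v i) (hAi i) δ)) :
    -- then δ is Pareto efficient:
    ¬ ∃ δ' : A → ℝ, (∀ x, 0 ≤ δ' x) ∧ (∑ x, δ' x = ∑ i, C i) ∧
        (∀ i, leontief (v i) (hAi i) δ ≤ leontief (v i) (hAi i) δ') ∧
        (∃ i, leontief (v i) (hAi i) δ < leontief (v i) (hAi i) δ') :=
  stmt_6_general C v hAi δ hsum heq
end

section
/- In an equilibrium distribution, every charity that receives a positive amount is critical for at least one agent. -/
open Finset

lemma leontief_le {A : Type*} [Fintype A] (v : A → ℝ)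
    (h : (Finset.univ.filter fun x => 0 < v x).Nonempty) (δ : A → ℝ) {x : A}
    (hx : x ∈ Finset.univ.filter fun y => 0 < v y) :
    leontief v h δ ≤ δ x / v x :=
  Finset.inf'_le _ hx

lemma lt_leontief {A : Type*} [Fintype A] (v : A → ℝ)
    (h : (Finset.univ.filter fun x => 0 < v x).Nonempty) (δ : A → ℝ) {a : ℝ}
    (ha : ∀ x ∈ Finset.univ.filter fun y => 0 < v y, a < δ x / v x) :
    a < leontief v h δ :=
  (Finset.lt_inf'_iff h).mpr ha

lemma le_leontief {A : Type*} [Fintype A] (v : A → ℝ)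
    (h : (Finset.univ.filter fun x => 0 < v x).Nonempty) (δ : A → ℝ) {a : ℝ}
    (ha : ∀ x ∈ Finset.univ.filter fun y => 0 < v y, a ≤ δ x / v x) :
    a ≤ leontief v h δ :=
  Finset.le_inf' h _ ha

theorem stmt_7 {N A : Type*} [Fintype N] [Fintype A]
    (C : N → ℝ) (hC : ∀ i, 0 ≤ C i)
    (v : N → A → ℝ) (hv : ∀ i x, 0 ≤ v i x)
    (hAi : ∀ i, (Finset.univ.filter fun x => 0 < v i x).Nonempty)
    (δ : A → ℝ) (hδ : ∀ x, 0 ≤ δ x) (hsum : ∑ x, δ x = ∑ i, C i)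
    -- δ is in equilibrium:
    (heq : ∃ δi : N → A → ℝ, (∀ i x, 0 ≤ δi i x) ∧ (∀ x, ∑ i, δi i x = δ x) ∧
        (∀ i, ∑ x, δi i x = C i) ∧
        (∀ i, ∀ δi' : A → ℝ, (∀ x, 0 ≤ δi' x) → (∑ x, δi' x = C i) →
          leontief (v i) (hAi i) (fun x => δ x - δi i x + δi' x) ≤ leontief (v i) (hAi i) δ)) :
    -- every positively funded charity is critical for some agent:
    ∀ x, 0 < δ x → ∃ i, 0 < v i x ∧ δ x / v i x = leontief (v i) (hAi i) δ := by
  classical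
  obtain ⟨δi, hδi0, hδisum, hδiC, hopt⟩ := heq
  intro x hx
  by_contra hne
  push_neg at hne
  -- find an agent contributing positively to x
  have hex : ∃ i, 0 < δi i x := by
    by_contra h
    push_neg at h
    have : ∑ i, δi i x ≤ 0 := Finset.sum_nonpos fun i _ => h i
    rw [hδisum x] at this; linarith
  obtain ⟨i, hix⟩ := hex
  set u := leontief (v i) (hAi i) δ with hu
  -- key positivity: δ x - u * v i x > 0
  have hxd : 0 < δ x - u * v i x := by
    rcases (hv i x).lt_or_eq with hvx | hvx
    · have h1 : u ≤ δ x / v i x :=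
        leontief_le (v i) (hAi i) δ (by simp [hvx])
      have h2 : u < δ x / v i x := lt_of_le_of_ne h1 (Ne.symm (hne i hvx))
      have := (lt_div_iff₀ hvx).mp h2
      linarith
    · rw [← hvx]; linarith
  -- the other positive-weight charities
  have hPe : ((Finset.univ.filter fun y => 0 < v i y).erase x).Nonempty := by
    by_contra h
    rw [Finset.not_nonempty_iff_eq_empty, Finset.erase_eq_empty_iff] at h
    rcases h with h | h
    · exact absurd h (Finset.nonempty_iff_ne_empty.mp (hAi i))
    · have hxP : x ∈ Finset.univ.filter fun y => 0 < v i y := by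
        rw [h]; exact Finset.mem_singleton_self x
      have hvx : 0 < v i x := (Finset.mem_filter.mp hxP).2
      have hle : u ≤ δ x / v i x := leontief_le (v i) (hAi i) δ hxP
      have hge : δ x / v i x ≤ u := by
        apply le_leontief
        intro y hy
        rw [h, Finset.mem_singleton] at hy
        subst hy; exact le_refl _
      exact hne i hvx (le_antisymm hge hle)
  set S := ∑ y ∈ (Finset.univ.filter fun y => 0 < v i y).erase x, v i y with hSdef
  have hS : 0 < S := by
    apply Finset.sum_pos _ hPe
    intro y hy
    exact (Finset.mem_filter.mp (Finset.mem_of_mem_erase hy)).2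
  set ε := min (δi i x) ((δ x - u * v i x) / 2) with hεdef
  have hε : 0 < ε := lt_min hix (by linarith)
  set g : A → ℝ := fun y => if y = x then -ε else ε / S * (if 0 < v i y then v i y else 0)
    with hg
  have hgsum : ∑ y, g y = 0 := by
    rw [← Finset.add_sum_erase _ g (Finset.mem_univ x)]
    have h1 : g x = -ε := by simp [hg]
    have h2 : ∑ y ∈ Finset.univ.erase x, g y = ε := by
      have : ∀ y ∈ Finset.univ.erase x, g y = ε / S * (if 0 < v i y then v i y else 0) := by
        intro y hy
        simp [hg, Finset.ne_of_mem_erase hy]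
      rw [Finset.sum_congr rfl this, ← Finset.mul_sum, Finset.sum_ite, Finset.sum_const,
        smul_zero, add_zero]
      have hfe : (Finset.univ.erase x).filter (fun y => 0 < v i y)
          = (Finset.univ.filter fun y => 0 < v i y).erase x := by
        ext y; simp [Finset.mem_filter, Finset.mem_erase, and_comm]
      rw [hfe, ← hSdef, div_mul_cancel₀ _ (ne_of_gt hS)]
    rw [h1, h2]; ring
  -- the deviating distribution
  set δi' : A → ℝ := fun y => δi i y + g y with hδi'
  have hδi'0 : ∀ y, 0 ≤ δi' y := by
    intro y
    by_cases hyx : y = x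
    · subst hyx
      have h1 : g y = -ε := by simp [hg]
      have : ε ≤ δi i y := min_le_left _ _
      simp only [hδi', h1]
      linarith
    · simp only [hδi', hg, if_neg hyx]
      have h1 : 0 ≤ ε / S * (if 0 < v i y then v i y else 0) := by
        apply mul_nonneg (le_of_lt (div_pos hε hS))
        split <;> [linarith; rfl]
      linarith [hδi0 i y]
  have hδi'sum : ∑ y, δi' y = C i := by
    simp only [hδi']
    rw [Finset.sum_add_distrib, hgsum, add_zero, hδiC i]
  have hkey := hopt i δi' hδi'0 hδi'sum
  have hfun : (fun y => δ y - δi i y + δi' y) = fun y => δ y + g y := by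
    funext y; simp only [hδi']; ring
  rw [hfun] at hkey
  -- but the deviation strictly improves utility
  have hlt : u < leontief (v i) (hAi i) fun y => δ y + g y := by
    apply lt_leontief
    intro y hy
    have hvy : 0 < v i y := (Finset.mem_filter.mp hy).2
    by_cases hyx : y = x
    · subst hyx
      simp only [hg, if_pos rfl]
      rw [lt_div_iff₀ hvy]
      have h2 : ε ≤ (δ y - u * v i y) / 2 := min_le_right _ _
      linarith
    · simp only [hg, if_neg hyx, if_pos hvy]
      have heq2 : (δ y + ε / S * v i y) / v i y = δ y / v i y + ε / S := by
        rw [add_div, mul_div_assoc, div_self (ne_of_gt hvy), mul_one]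
      rw [heq2]
      have h1 : u ≤ δ y / v i y := leontief_le (v i) (hAi i) δ hy
      have h2 : 0 < ε / S := div_pos hε hS
      linarith
  linarith
end

section
/- Every equilibrium distribution maximizes the weighted Nash welfare ∑_i C_i · log u_i(δ) over all distributions with the same total endowment. -/
open Finset

/-- Extended-real logarithm with the convention `log 0 = -∞`. -/
noncomputable def elog (r : ℝ) : EReal := if r ≤ 0 then ⊥ else (Real.log r : EReal)

/-- Weighted Nash welfare `∑ i, C i * log (u i)` with `log 0 = -∞`. -/
noncomputable def nashWelfare {N : Type*} [Fintype N] (C : N → ℝ) (u : N → ℝ) : EReal :=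
  ∑ i, (C i : EReal) * elog (u i)

lemma ereal_coe_sum {ι : Type*} (s : Finset ι) (f : ι → ℝ) :
    ((∑ i ∈ s, f i : ℝ) : EReal) = ∑ i ∈ s, (f i : EReal) :=
  map_sum (⟨⟨Real.toEReal, EReal.coe_zero⟩, EReal.coe_add⟩ : ℝ →+ EReal) f s

theorem stmt_9 {N A : Type*} [Fintype N] [Fintype A]
    (C : N → ℝ) (hC : ∀ i, 0 ≤ C i)
    (v : N → A → ℝ) (hv : ∀ i x, 0 ≤ v i x)
    (hAi : ∀ i, (Finset.univ.filter fun x => 0 < v i x).Nonempty)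
    (δ : A → ℝ) (hδ : ∀ x, 0 ≤ δ x) (hsum : ∑ x, δ x = ∑ i, C i)
    -- δ is in equilibrium (decomposition supported on critical charities):
    (heq : ∃ δi : N → A → ℝ, (∀ i x, 0 ≤ δi i x) ∧ (∀ x, ∑ i, δi i x = δ x) ∧
        (∀ i, ∑ x, δi i x = C i) ∧
        (∀ i x, ¬ (0 < v i x ∧ δ x / v i x = leontief (v i) (hAi i) δ) → δi i x = 0)) :
    -- then δ maximizes weighted Nash welfare:
    ∀ δ' : A → ℝ, (∀ x, 0 ≤ δ' x) → (∑ x, δ' x = ∑ i, C i) →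
      nashWelfare C (fun i => leontief (v i) (hAi i) δ') ≤
        nashWelfare C (fun i => leontief (v i) (hAi i) δ) := by
  obtain ⟨δi, hδi_nn, hδi_col, hδi_row, hδi_supp⟩ := heq
  intro δ' hδ' hsum'
  set u : N → ℝ := fun i => leontief (v i) (hAi i) δ with hu_def
  set u' : N → ℝ := fun i => leontief (v i) (hAi i) δ' with hu'_def
  set S : Finset N := univ.filter fun i => 0 < C i with hS_def
  -- nonnegativity of utilities
  have hu_nn : ∀ i, 0 ≤ u i := by
    intro i
    apply Finset.le_inf'
    intro x hx
    exact div_nonneg (hδ x) (le_of_lt (mem_filter.mp hx).2)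
  have hu'_nn : ∀ i, 0 ≤ u' i := by
    intro i
    apply Finset.le_inf'
    intro x hx
    exact div_nonneg (hδ' x) (le_of_lt (mem_filter.mp hx).2)
  -- positivity of u on S
  have hu_pos : ∀ i ∈ S, 0 < u i := by
    intro i hi
    have hCi : 0 < C i := (mem_filter.mp hi).2
    rcases lt_or_eq_of_le (hu_nn i) with h | h
    · exact h
    -- u i = 0: derive C i = 0, contradiction
    exfalso
    have hall : ∀ x, δi i x = 0 := by
      intro x
      by_cases hcrit : 0 < v i x ∧ δ x / v i x = leontief (v i) (hAi i) δ
      · have hδx : δ x = 0 := by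
          have h1' : δ x / v i x = u i := hcrit.2
          have h1 : δ x / v i x = 0 := by rw [h1']; exact h.symm
          have := (div_eq_zero_iff.mp h1)
          rcases this with h2 | h2
          · exact h2
          · exact absurd h2 (ne_of_gt hcrit.1)
        have hle : δi i x ≤ δ x := by
          rw [← hδi_col x]
          exact Finset.single_le_sum (fun j _ => hδi_nn j x) (mem_univ i)
        exact le_antisymm (hδx ▸ hle) (hδi_nn i x)
      · exact hδi_supp i x hcrit
    have : C i = 0 := by rw [← hδi_row i]; simp [hall]
    linarith
  -- key ratio function
  set r : A → ℝ := fun x => if 0 < δ x then δ' x / δ x else 0 with hr_def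
  have hr_nn : ∀ x, 0 ≤ r x := by
    intro x
    by_cases h : 0 < δ x
    · simp only [hr_def, if_pos h]; exact div_nonneg (hδ' x) (le_of_lt h)
    · simp [hr_def, if_neg h]
  -- key step 1: termwise bound for i ∈ S
  have hstep1 : ∀ i ∈ S, C i * (u' i / u i) ≤ ∑ x, δi i x * r x := by
    intro i hi
    have hui : 0 < u i := hu_pos i hi
    calc C i * (u' i / u i) = ∑ x, δi i x * (u' i / u i) := by
          rw [← Finset.sum_mul, hδi_row]
      _ ≤ ∑ x, δi i x * r x := by
          apply Finset.sum_le_sum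
          intro x _
          rcases eq_or_lt_of_le (hδi_nn i x) with h0 | h0
          · rw [← h0, zero_mul, zero_mul]
          · apply mul_le_mul_of_nonneg_left _ (le_of_lt h0)
            have hcrit : 0 < v i x ∧ δ x / v i x = leontief (v i) (hAi i) δ := by
              by_contra hc
              exact absurd (hδi_supp i x hc) (ne_of_gt h0)
            have hδx : δ x = u i * v i x := by
              have h2 : δ x / v i x = u i := hcrit.2
              field_simp [ne_of_gt hcrit.1] at h2
              linarith
            have hδx_pos : 0 < δ x := hδx ▸ mul_pos hui hcrit.1
            have hru : r x = δ' x / δ x := by simp [hr_def, if_pos hδx_pos]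
            rw [hru]
            have hle : u' i ≤ δ' x / v i x := by
              apply Finset.inf'_le
              exact mem_filter.mpr ⟨mem_univ x, hcrit.1⟩
            calc u' i / u i ≤ (δ' x / v i x) / u i := by
                  gcongr
              _ = δ' x / δ x := by
                  rw [div_div, hδx, mul_comm]
  classical
  -- sum of C over S equals total
  have hSsum : ∑ i ∈ S, C i = ∑ i, C i := by
    apply Finset.sum_subset (Finset.subset_univ S)
    intro i _ hiS
    have : ¬ 0 < C i := by
      intro h; exact hiS (mem_filter.mpr ⟨mem_univ i, h⟩)
    linarith [hC i, this]
  -- key step 2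
  have hstep2 : ∑ i ∈ S, C i * (u' i / u i) ≤ ∑ i, C i := by
    calc ∑ i ∈ S, C i * (u' i / u i) ≤ ∑ i ∈ S, ∑ x, δi i x * r x :=
          Finset.sum_le_sum hstep1
      _ ≤ ∑ i, ∑ x, δi i x * r x := by
          apply Finset.sum_le_sum_of_subset_of_nonneg (Finset.subset_univ S)
          intro i _ _
          exact Finset.sum_nonneg fun x _ => mul_nonneg (hδi_nn i x) (hr_nn x)
      _ = ∑ x, (∑ i, δi i x) * r x := by
          rw [Finset.sum_comm]
          simp_rw [Finset.sum_mul]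
      _ = ∑ x, δ x * r x := by
          simp_rw [hδi_col]
      _ ≤ ∑ x, δ' x := by
          apply Finset.sum_le_sum
          intro x _
          by_cases h : 0 < δ x
          · simp only [hr_def, if_pos h]
            rw [mul_div_cancel₀ _ (ne_of_gt h)]
          · simp only [hr_def, if_neg h, mul_zero]
            exact hδ' x
      _ = ∑ i, C i := hsum'
  -- Nash welfare as a real sum when utilities positive on S
  have hNW : ∀ w : N → ℝ, (∀ i ∈ S, 0 < w i) →
      nashWelfare C w = ((∑ i ∈ S, C i * Real.log (w i) : ℝ) : EReal) := by
    intro w hw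
    unfold nashWelfare
    rw [← Finset.sum_filter_add_sum_filter_not univ (fun i => 0 < C i)]
    have hz : ∑ i ∈ univ.filter (fun i => ¬ 0 < C i), (C i : EReal) * elog (w i) = 0 := by
      apply Finset.sum_eq_zero
      intro i hi
      have hCz : C i = 0 := le_antisymm (not_lt.mp (mem_filter.mp hi).2) (hC i)
      rw [hCz]
      simp [EReal.zero_mul]
    rw [hz, add_zero, ereal_coe_sum]
    apply Finset.sum_congr rfl
    intro i hi
    have hwi : 0 < w i := hw i hi
    rw [show elog (w i) = (Real.log (w i) : EReal) from if_neg (not_le.mpr hwi),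
      ← EReal.coe_mul]
  by_cases hcase : ∀ i ∈ S, 0 < u' i
  · -- main case: real inequality
    have hreal : ∑ i ∈ S, C i * Real.log (u' i) ≤ ∑ i ∈ S, C i * Real.log (u i) := by
      have h1 : ∑ i ∈ S, (C i * Real.log (u' i) - C i * Real.log (u i)) ≤
          ∑ i ∈ S, (C i * (u' i / u i) - C i) := by
        apply Finset.sum_le_sum
        intro i hi
        have hui := hu_pos i hi
        have hui' := hcase i hi
        have h2 : Real.log (u' i) - Real.log (u i) ≤ u' i / u i - 1 := by
          rw [← Real.log_div (ne_of_gt hui') (ne_of_gt hui)]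
          exact Real.log_le_sub_one_of_pos (div_pos hui' hui)
        calc C i * Real.log (u' i) - C i * Real.log (u i)
            = C i * (Real.log (u' i) - Real.log (u i)) := by ring
          _ ≤ C i * (u' i / u i - 1) := mul_le_mul_of_nonneg_left h2 (hC i)
          _ = C i * (u' i / u i) - C i := by ring
      rw [Finset.sum_sub_distrib, Finset.sum_sub_distrib] at h1
      have := hstep2
      linarith [hSsum]
    rw [hNW _ hcase, hNW _ hu_pos]
    exact EReal.coe_le_coe_iff.mpr hreal
  · -- degenerate case: some agent with positive contribution has zero utility at δ'
    push_neg at hcase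
    obtain ⟨i0, hi0, hle⟩ := hcase
    have hbot : nashWelfare C u' = ⊥ := by
      unfold nashWelfare
      rw [← Finset.add_sum_erase _ _ (mem_univ i0)]
      have he : elog (u' i0) = ⊥ := if_pos hle
      rw [he, EReal.coe_mul_bot_of_pos (mem_filter.mp hi0).2, EReal.bot_add]
    rw [hbot]
    exact bot_le
end

section
/- The equilibrium distribution rule satisfies contribution-monotonicity: if δ and δ' are equilibrium distributions for two profiles that differ only in that one agent's contribution weakly increased (C'_i ≥ C_i for all i), then δ'(x) ≥ δ(x) for every charity x. -/
open Finset

theorem stmt_13 {N A : Type*} [Fintype N] [Fintype A]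
    (v : N → A → ℝ) (hv : ∀ i x, 0 ≤ v i x)
    (hAi : ∀ i, (Finset.univ.filter fun x => 0 < v i x).Nonempty)
    (C C' : N → ℝ) (hC : ∀ i, 0 ≤ C i)
    (hle : ∀ i, C i ≤ C' i)
    (hone : ∃ j, ∀ i, i ≠ j → C' i = C i)
    (δ δ' : A → ℝ) (hδ : ∀ x, 0 ≤ δ x) (hδ' : ∀ x, 0 ≤ δ' x)
    (hsum : ∑ x, δ x = ∑ i, C i) (hsum' : ∑ x, δ' x = ∑ i, C' i)
    -- δ is the equilibrium distribution for profile with contributions C: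
    (heq : ∃ δi : N → A → ℝ, (∀ i x, 0 ≤ δi i x) ∧ (∀ x, ∑ i, δi i x = δ x) ∧
        (∀ i, ∑ x, δi i x = C i) ∧
        (∀ i x, ¬ (0 < v i x ∧ δ x / v i x = leontief (v i) (hAi i) δ) → δi i x = 0))
    -- δ' is the equilibrium distribution for profile with contributions C':
    (heq' : ∃ δi : N → A → ℝ, (∀ i x, 0 ≤ δi i x) ∧ (∀ x, ∑ i, δi i x = δ' x) ∧
        (∀ i, ∑ x, δi i x = C' i) ∧
        (∀ i x, ¬ (0 < v i x ∧ δ' x / v i x = leontief (v i) (hAi i) δ') → δi i x = 0)) :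
    ∀ x, δ x ≤ δ' x := by
  obtain ⟨f, hf0, hfcol, hfrow, hfsupp⟩ := heq
  obtain ⟨g, hg0, hgcol, hgrow, hgsupp⟩ := heq'
  by_contra hcon
  push_neg at hcon
  obtain ⟨x0, hx0⟩ := hcon
  set u : N → ℝ := fun i => leontief (v i) (hAi i) δ with hu
  set u' : N → ℝ := fun i => leontief (v i) (hAi i) δ' with hu'
  set S : Finset A := univ.filter (fun x => δ' x < δ x) with hS
  have hx0S : x0 ∈ S := by simp [hS, hx0]
  set T : Finset N := univ.filter (fun i => u' i < u i) with hT
  have key : ∀ i x, 0 < f i x → 0 < v i x ∧ δ x / v i x = u i := by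
    intro i x h
    by_contra hc
    have := hfsupp i x hc
    linarith
  have key' : ∀ i x, 0 < g i x → 0 < v i x ∧ δ' x / v i x = u' i := by
    intro i x h
    by_contra hc
    have := hgsupp i x hc
    linarith
  have infle' : ∀ i x, 0 < v i x → u' i ≤ δ' x / v i x := by
    intro i x hx
    exact Finset.inf'_le _ (mem_filter.mpr ⟨mem_univ x, hx⟩)
  have infle : ∀ i x, 0 < v i x → u i ≤ δ x / v i x := by
    intro i x hx
    exact Finset.inf'_le _ (mem_filter.mpr ⟨mem_univ x, hx⟩)
  -- Step A: contributors to S under δ have strictly decreased utility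
  have stepA : ∀ i x, x ∈ S → 0 < f i x → i ∈ T := by
    intro i x hxS hpos
    obtain ⟨hvx, hcrit⟩ := key i x hpos
    have hxS' : δ' x < δ x := by
      have := (mem_filter.mp hxS).2; simpa using this
    have h1 : δ' x / v i x < δ x / v i x := by gcongr
    have h2 := infle' i x hvx
    refine mem_filter.mpr ⟨mem_univ i, ?_⟩
    linarith [hcrit]
  -- Step B: agents in T place all of δ' contribution inside S
  have stepB : ∀ i, i ∈ T → ∀ y, 0 < g i y → y ∈ S := by
    intro i hiT y hpos
    obtain ⟨hvy, hcrit⟩ := key' i y hpos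
    have hiT' : u' i < u i := (mem_filter.mp hiT).2
    have h2 := infle i y hvy
    refine mem_filter.mpr ⟨mem_univ y, ?_⟩
    have : δ' y / v i y < δ y / v i y := by
      calc δ' y / v i y = u' i := hcrit
        _ < u i := hiT'
        _ ≤ δ y / v i y := h2
    have h3 := mul_lt_mul_of_pos_right this hvy
    rwa [div_mul_cancel₀ _ (ne_of_gt hvy), div_mul_cancel₀ _ (ne_of_gt hvy)] at h3
  -- outside T, no δ-contribution lands in S
  have hzero : ∀ i, i ∉ T → ∀ x ∈ S, f i x = 0 := by
    intro i hiT x hxS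
    by_contra hne
    have hpos : 0 < f i x := lt_of_le_of_ne (hf0 i x) (Ne.symm hne)
    exact hiT (stepA i x hxS hpos)
  have hzero' : ∀ i ∈ T, ∀ y, y ∉ S → g i y = 0 := by
    intro i hiT y hyS
    by_contra hne
    have hpos : 0 < g i y := lt_of_le_of_ne (hg0 i y) (Ne.symm hne)
    exact hyS (stepB i hiT y hpos)
  have main : ∑ x ∈ S, δ x ≤ ∑ x ∈ S, δ' x := by
    calc ∑ x ∈ S, δ x = ∑ x ∈ S, ∑ i, f i x := by
          exact sum_congr rfl fun x _ => (hfcol x).symm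
      _ = ∑ i, ∑ x ∈ S, f i x := Finset.sum_comm
      _ = ∑ i ∈ T, ∑ x ∈ S, f i x := by
          refine (Finset.sum_subset (subset_univ T) ?_).symm
          intro i _ hiT
          exact Finset.sum_eq_zero fun x hx => hzero i hiT x hx
      _ ≤ ∑ i ∈ T, ∑ x, f i x := by
          refine Finset.sum_le_sum fun i _ => ?_
          exact Finset.sum_le_sum_of_subset_of_nonneg (subset_univ S)
            (fun x _ _ => hf0 i x)
      _ = ∑ i ∈ T, C i := sum_congr rfl fun i _ => hfrow i
      _ ≤ ∑ i ∈ T, C' i := Finset.sum_le_sum fun i _ => hle i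
      _ = ∑ i ∈ T, ∑ x, g i x := sum_congr rfl fun i _ => (hgrow i).symm
      _ = ∑ i ∈ T, ∑ x ∈ S, g i x := by
          refine sum_congr rfl fun i hiT => ?_
          refine (Finset.sum_subset (subset_univ S) ?_).symm
          intro y _ hyS
          exact hzero' i hiT y hyS
      _ ≤ ∑ i, ∑ x ∈ S, g i x := by
          refine Finset.sum_le_sum_of_subset_of_nonneg (subset_univ T) ?_
          intro i _ _
          exact Finset.sum_nonneg fun x _ => hg0 i x
      _ = ∑ x ∈ S, ∑ i, g i x := Finset.sum_comm
      _ = ∑ x ∈ S, δ' x := sum_congr rfl fun x _ => hgcol x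
  have hlt : ∑ x ∈ S, δ' x < ∑ x ∈ S, δ x := by
    refine Finset.sum_lt_sum_of_nonempty ⟨x0, hx0S⟩ ?_
    intro x hx
    exact (mem_filter.mp hx).2
  linarith
end

section
/- If two distributions δ and δ' of the same total are both equilibrium distributions for the same profile, then δ = δ' (uniqueness of the equilibrium distribution). -/
open Finset

theorem stmt14_aux {N A : Type*} [Fintype N] [Fintype A]
    (C : N → ℝ) (v : N → A → ℝ)
    (hAi : ∀ i, (Finset.univ.filter fun x => 0 < v i x).Nonempty)
    (δ δ' : A → ℝ)
    (heq : ∃ δi : N → A → ℝ, (∀ i x, 0 ≤ δi i x) ∧ (∀ x, ∑ i, δi i x = δ x) ∧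
        (∀ i, ∑ x, δi i x = C i) ∧
        (∀ i x, ¬ (0 < v i x ∧ δ x / v i x = leontief (v i) (hAi i) δ) → δi i x = 0))
    (heq' : ∃ δi : N → A → ℝ, (∀ i x, 0 ≤ δi i x) ∧ (∀ x, ∑ i, δi i x = δ' x) ∧
        (∀ i, ∑ x, δi i x = C i) ∧
        (∀ i x, ¬ (0 < v i x ∧ δ' x / v i x = leontief (v i) (hAi i) δ') → δi i x = 0)) :
    ∀ x, δ x ≤ δ' x := by
  classical
  by_contra h
  push_neg at h
  obtain ⟨x0, hx0⟩ := h
  obtain ⟨d, dpos, dsum, dC, dsupp⟩ := heq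
  obtain ⟨d', d'pos, d'sum, d'C, d'supp⟩ := heq'
  set S : Finset A := Finset.univ.filter (fun x => δ' x < δ x) with hS
  set T : Finset N := Finset.univ.filter
    (fun i => leontief (v i) (hAi i) δ' < leontief (v i) (hAi i) δ) with hT
  have crit : ∀ i x, 0 < d i x →
      0 < v i x ∧ δ x / v i x = leontief (v i) (hAi i) δ := by
    intro i x hpos
    by_contra hc
    exact absurd (dsupp i x hc) (by linarith)
  have crit' : ∀ i x, 0 < d' i x →
      0 < v i x ∧ δ' x / v i x = leontief (v i) (hAi i) δ' := by
    intro i x hpos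
    by_contra hc
    exact absurd (d'supp i x hc) (by linarith)
  have mem_T : ∀ i x, x ∈ S → 0 < d i x → i ∈ T := by
    intro i x hxS hpos
    obtain ⟨hvx, hcrit⟩ := crit i x hpos
    have hxS' : δ' x < δ x := (Finset.mem_filter.mp hxS).2
    have h1 : leontief (v i) (hAi i) δ' ≤ δ' x / v i x :=
      Finset.inf'_le _ (Finset.mem_filter.mpr ⟨Finset.mem_univ x, hvx⟩)
    have h2 : δ' x / v i x < δ x / v i x := by
      apply div_lt_div_of_pos_right hxS' hvx
    rw [hT, Finset.mem_filter]
    exact ⟨Finset.mem_univ i, by linarith⟩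
  have mem_S : ∀ i x, i ∈ T → 0 < d' i x → x ∈ S := by
    intro i x hiT hpos
    obtain ⟨hvx, hcrit⟩ := crit' i x hpos
    have hiT' : leontief (v i) (hAi i) δ' < leontief (v i) (hAi i) δ :=
      (Finset.mem_filter.mp hiT).2
    have h1 : leontief (v i) (hAi i) δ ≤ δ x / v i x :=
      Finset.inf'_le _ (Finset.mem_filter.mpr ⟨Finset.mem_univ x, hvx⟩)
    have h2 : δ' x / v i x < δ x / v i x := by linarith
    have h3 : δ' x < δ x := by
      have := (div_lt_div_iff_of_pos_right hvx).mp h2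
      exact this
    rw [hS, Finset.mem_filter]
    exact ⟨Finset.mem_univ x, h3⟩
  have hSne : S.Nonempty := ⟨x0, Finset.mem_filter.mpr ⟨Finset.mem_univ _, hx0⟩⟩
  have sum1 : ∑ x ∈ S, δ x ≤ ∑ i ∈ T, C i := by
    calc ∑ x ∈ S, δ x = ∑ x ∈ S, ∑ i, d i x :=
          Finset.sum_congr rfl (fun x _ => (dsum x).symm)
      _ = ∑ i, ∑ x ∈ S, d i x := Finset.sum_comm
      _ = ∑ i ∈ T, ∑ x ∈ S, d i x := by
          symm
          apply Finset.sum_subset (Finset.subset_univ T)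
          intro i _ hiT
          apply Finset.sum_eq_zero
          intro x hxS
          by_contra hne
          exact hiT (mem_T i x hxS (lt_of_le_of_ne (dpos i x) (Ne.symm hne)))
      _ ≤ ∑ i ∈ T, ∑ x, d i x := by
          apply Finset.sum_le_sum
          intro i _
          exact Finset.sum_le_sum_of_subset_of_nonneg (Finset.subset_univ S)
            (fun x _ _ => dpos i x)
      _ = ∑ i ∈ T, C i := Finset.sum_congr rfl (fun i _ => dC i)
  have sum2 : ∑ i ∈ T, C i ≤ ∑ x ∈ S, δ' x := by
    calc ∑ i ∈ T, C i = ∑ i ∈ T, ∑ x, d' i x :=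
          Finset.sum_congr rfl (fun i _ => (d'C i).symm)
      _ = ∑ i ∈ T, ∑ x ∈ S, d' i x := by
          apply Finset.sum_congr rfl
          intro i hiT
          symm
          apply Finset.sum_subset (Finset.subset_univ S)
          intro x _ hxS
          by_contra hne
          exact hxS (mem_S i x hiT (lt_of_le_of_ne (d'pos i x) (Ne.symm hne)))
      _ = ∑ x ∈ S, ∑ i ∈ T, d' i x := Finset.sum_comm
      _ ≤ ∑ x ∈ S, ∑ i, d' i x := by
          apply Finset.sum_le_sum
          intro x _
          exact Finset.sum_le_sum_of_subset_of_nonneg (Finset.subset_univ T)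
            (fun i _ _ => d'pos i x)
      _ = ∑ x ∈ S, δ' x := Finset.sum_congr rfl (fun x _ => d'sum x)
  have strict : ∑ x ∈ S, δ' x < ∑ x ∈ S, δ x :=
    Finset.sum_lt_sum_of_nonempty hSne (fun x hx => (Finset.mem_filter.mp hx).2)
  linarith

theorem stmt_14 {N A : Type*} [Fintype N] [Fintype A]
    (C : N → ℝ) (hC : ∀ i, 0 ≤ C i)
    (v : N → A → ℝ) (hv : ∀ i x, 0 ≤ v i x)
    (hAi : ∀ i, (Finset.univ.filter fun x => 0 < v i x).Nonempty)
    (δ δ' : A → ℝ) (hδ : ∀ x, 0 ≤ δ x) (hδ' : ∀ x, 0 ≤ δ' x)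
    (hsum : ∑ x, δ x = ∑ i, C i) (hsum' : ∑ x, δ' x = ∑ i, C i)
    -- δ is an equilibrium distribution:
    (heq : ∃ δi : N → A → ℝ, (∀ i x, 0 ≤ δi i x) ∧ (∀ x, ∑ i, δi i x = δ x) ∧
        (∀ i, ∑ x, δi i x = C i) ∧
        (∀ i x, ¬ (0 < v i x ∧ δ x / v i x = leontief (v i) (hAi i) δ) → δi i x = 0))
    -- δ' is an equilibrium distribution:
    (heq' : ∃ δi : N → A → ℝ, (∀ i x, 0 ≤ δi i x) ∧ (∀ x, ∑ i, δi i x = δ' x) ∧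
        (∀ i, ∑ x, δi i x = C i) ∧
        (∀ i x, ¬ (0 < v i x ∧ δ' x / v i x = leontief (v i) (hAi i) δ') → δi i x = 0)) :
    δ = δ' := by
  funext x
  exact le_antisymm (stmt14_aux C v hAi δ δ' heq heq' x)
    (stmt14_aux C v hAi δ' δ heq' heq x)
end

section
/- With binary weights, the equilibrium distribution equals the unique decomposable distribution that is leximin-maximal over charities: among all distributions δ admitting a decomposition where each agent contributes only to her approved charities, the equilibrium distribution maximizes the sorted (increasing) vector (δ(x))_{x∈A} lexicographically. -/
/-! For a threshold `t` let `L = {x | δstar x ≤ t}`. A decomposable `δ` puts on `L` at most the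
budget of the agents approving some charity of `L`; in the equilibrium each such agent has her
minimum at most `t`, so she spends her whole budget inside `L`. Hence `δ(L) ≤ δstar(L)`. The
`#L` smallest values of `δ` sum to at most `δ(L)`, while `δstar(L)` is the sum of the `#L`
smallest values of `δstar`. So at every cut of the sorted vector of `δstar` at a value change,
the prefix sum of the sorted vector of `δ` is no larger, and that rules out `δ` being
leximin-larger than `δstar`: at the first index where they differ it would beat `δstar` on the
whole block up to the next cut. -/

open Finset

/-- The multiset of values of `δ`, sorted in increasing order. -/
noncomputable def sortedVec {A : Type*} [Fintype A] (δ : A → ℝ) : List ℝ :=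
  Multiset.sort (Finset.univ.val.map δ) (· ≤ ·)

namespace List

variable {α : Type*} [AddCommMonoid α] [LinearOrder α] [IsOrderedCancelAddMonoid α]

theorem sum_take_le_sum_take_of_sublist {l' l : List α} (h : l' <+ l)
    (hl : l.Pairwise (· ≤ ·)) : ∀ m ≤ l'.length, (l.take m).sum ≤ (l'.take m).sum := by
  induction h with
  | slnil => simp
  | @cons l' l a h ih =>
    obtain ⟨ha, hl⟩ := pairwise_cons.mp hl
    rintro (_ | k) hk
    · simp
    have hkl : k < l.length := by have := h.length_le; omega
    calc ((a :: l).take (k + 1)).sum = a + (l.take k).sum := by simp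
      _ ≤ l[k] + (l.take k).sum := by gcongr; exact ha _ (getElem_mem hkl)
      _ = (l.take (k + 1)).sum := by rw [sum_take_succ _ _ hkl, add_comm]
      _ ≤ (l'.take (k + 1)).sum := ih hl _ hk
  | @cons_cons l' l a h ih =>
    rintro (_ | k) hk
    · simp
    simpa using ih (pairwise_cons.mp hl).2 k (by simpa using hk)

theorem sum_take_le_of_subperm {l' l : List α} (h : l' <+~ l) (hl : l.Pairwise (· ≤ ·)) :
    (l.take l'.length).sum ≤ l'.sum := by
  obtain ⟨l'', hperm, hsub⟩ := h
  simpa [← hperm.length_eq, ← hperm.sum_eq] using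
    sum_take_le_sum_take_of_sublist hsub hl _ le_rfl

theorem not_lex_of_sum_take_le_sum_filter {ls l : List α} (hls : ls.Pairwise (· ≤ ·))
    (hl : l.Pairwise (· ≤ ·)) (hlen : ls.length = l.length)
    (h : ∀ t, (l.take (ls.filter (· ≤ t)).length).sum ≤ (ls.filter (· ≤ t)).sum) :
    ¬Lex (· < ·) ls l := by
  intro hlex
  induction hlex with
  | nil => simp at hlen
  | @cons a ls l _ ih =>
    refine ih (pairwise_cons.mp hls).2 (pairwise_cons.mp hl).2 (by simpa using hlen) fun t => ?_
    by_cases hat : a ≤ t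
    · simpa [filter_cons_of_pos, hat] using h t
    · have : ls.filter (· ≤ t) = [] := filter_eq_nil_iff.mpr fun x hx hxt =>
        hat ((pairwise_cons.mp hls).1 x hx |>.trans (by simpa using hxt))
      simp [this]
  | @rel a ls b l hab =>
    set F := (a :: ls).filter (· ≤ a)
    set T := (b :: l).take F.length
    have hF : F.length ≠ 0 := by simp [F]
    have hT : T.length = F.length := by
      have : F.length ≤ (a :: ls).length := length_filter_le _ _
      simp only [T, length_take, length_cons] at this hlen ⊢
      omega
    have hFa : F.sum ≤ F.length • a :=
      sum_le_card_nsmul _ _ fun x hx => by simpa using of_mem_filter hx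
    have hbT : T.length • b ≤ T.sum := card_nsmul_le_sum _ _ fun x hx => by
      rcases mem_cons.mp (mem_of_mem_take hx) with rfl | hx
      exacts [le_rfl, (pairwise_cons.mp hl).1 x hx]
    have := h a
    rw [hT] at hbT
    exact (nsmul_lt_nsmul_right hF hab).not_ge (hbT.trans (this.trans hFa))

end List

theorem Multiset.sum_take_sort_le {α : Type*} [AddCommMonoid α] [LinearOrder α]
    [IsOrderedCancelAddMonoid α] {s t : Multiset α} (h : t ≤ s) :
    ((s.sort (· ≤ ·)).take t.card).sum ≤ t.sum := by
  induction t using Quotient.inductionOn with | h l' => ?_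
  rw [← s.sort_eq (· ≤ ·)] at h
  exact List.sum_take_le_of_subperm (Multiset.coe_le.mp h) (s.pairwise_sort _)

section SortedVec

variable {A : Type*} [Fintype A]

theorem pairwise_sortedVec (δ : A → ℝ) : (sortedVec δ).Pairwise (· ≤ ·) :=
  Multiset.pairwise_sort _ _

theorem length_sortedVec (δ : A → ℝ) : (sortedVec δ).length = Fintype.card A := by
  simp [sortedVec, Multiset.length_sort]

theorem sum_take_sortedVec_le (δ : A → ℝ) (S : Finset A) :
    ((sortedVec δ).take #S).sum ≤ ∑ x ∈ S, δ x := by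
  have hS : S.val.map δ ≤ univ.val.map δ := Multiset.map_le_map (val_le_iff.mpr (subset_univ S))
  have := Multiset.sum_take_sort_le hS
  rwa [Multiset.card_map] at this

theorem coe_filter_sortedVec (δ : A → ℝ) (t : ℝ) :
    (((sortedVec δ).filter (· ≤ t) : List ℝ) : Multiset ℝ) =
      ({x | δ x ≤ t} : Finset A).val.map δ := by
  rw [← Multiset.filter_coe, sortedVec, Multiset.sort_eq, Multiset.filter_map]
  rfl

theorem length_filter_sortedVec (δ : A → ℝ) (t : ℝ) :
    ((sortedVec δ).filter (· ≤ t)).length = #{x | δ x ≤ t} := by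
  rw [← Multiset.coe_card, coe_filter_sortedVec, Multiset.card_map]
  rfl

theorem sum_filter_sortedVec (δ : A → ℝ) (t : ℝ) :
    ((sortedVec δ).filter (· ≤ t)).sum = ∑ x with δ x ≤ t, δ x := by
  rw [← Multiset.sum_coe, coe_filter_sortedVec]
  rfl

end SortedVec

section Decomposition

variable {N A : Type*} [Fintype N] [Fintype A]

def IsDecomposition (C : N → ℝ) (Ai : N → Finset A) (δ : A → ℝ) (δi : N → A → ℝ) : Prop :=
  (∀ i x, 0 ≤ δi i x) ∧ (∀ x, ∑ i, δi i x = δ x) ∧ (∀ i, ∑ x, δi i x = C i) ∧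
    (∀ i x, x ∉ Ai i → δi i x = 0)

open Classical in
noncomputable def approvingBudget (C : N → ℝ) (Ai : N → Finset A) (L : Finset A) : ℝ :=
  ∑ i with ¬Disjoint (Ai i) L, C i

variable {C : N → ℝ} {Ai : N → Finset A} {δ : A → ℝ} {δi : N → A → ℝ}

namespace IsDecomposition

theorem sum_eq_sum_sum (hd : IsDecomposition C Ai δ δi) (L : Finset A) :
    ∑ x ∈ L, δ x = ∑ i, ∑ x ∈ L, δi i x := by
  rw [sum_comm]
  exact sum_congr rfl fun x _ => (hd.2.1 x).symm

theorem sum_eq_zero_of_disjoint (hd : IsDecomposition C Ai δ δi) {i : N} {L : Finset A}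
    (hi : Disjoint (Ai i) L) : ∑ x ∈ L, δi i x = 0 :=
  sum_eq_zero fun x hx => hd.2.2.2 i x (disjoint_right.mp hi hx)

theorem sum_eq_approvingBudget_of_forall (hd : IsDecomposition C Ai δ δi) {L : Finset A}
    (h : ∀ i, ¬Disjoint (Ai i) L → ∑ x ∈ L, δi i x = C i) :
    ∑ x ∈ L, δ x = approvingBudget C Ai L := by
  classical
  rw [hd.sum_eq_sum_sum, approvingBudget, sum_filter]
  refine sum_congr rfl fun i _ => ?_
  split_ifs with hi
  exacts [hd.sum_eq_zero_of_disjoint hi, h i hi]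

theorem sum_le_approvingBudget (hd : IsDecomposition C Ai δ δi) (L : Finset A) :
    ∑ x ∈ L, δ x ≤ approvingBudget C Ai L := by
  classical
  rw [hd.sum_eq_sum_sum, approvingBudget, sum_filter]
  refine sum_le_sum fun i _ => ?_
  split_ifs with hi
  · exact (hd.sum_eq_zero_of_disjoint hi).le
  · exact hd.2.2.1 i ▸ sum_le_univ_sum_of_nonneg (hd.1 i)

theorem sum_lowerSet_eq_approvingBudget (hAi : ∀ i, (Ai i).Nonempty)
    (hd : IsDecomposition C Ai δ δi)
    (heq : ∀ i x, δ x ≠ (Ai i).inf' (hAi i) δ → δi i x = 0) (t : ℝ) :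
    ∑ x with δ x ≤ t, δ x = approvingBudget C Ai {x | δ x ≤ t} := by
  refine hd.sum_eq_approvingBudget_of_forall fun i hi => ?_
  obtain ⟨y, hyA, hyL⟩ := not_disjoint_iff.mp hi
  have hmin : (Ai i).inf' (hAi i) δ ≤ t := (inf'_le δ hyA).trans (by simpa using hyL)
  rw [← hd.2.2.1 i]
  refine sum_subset (subset_univ _) fun x _ hx => heq i x fun hx_min => hx ?_
  simpa [hx_min] using hmin

end IsDecomposition

end Decomposition

theorem stmt_15_general {N A : Type*} [Fintype N] [Fintype A]
    (C : N → ℝ)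
    (Ai : N → Finset A) (hAi : ∀ i, (Ai i).Nonempty)
    (δstar : A → ℝ)
    -- δstar is the equilibrium distribution: it has a decomposition in which each
    -- agent contributes only to approved charities achieving her minimum:
    (heq : ∃ δi : N → A → ℝ, (∀ i x, 0 ≤ δi i x) ∧ (∀ x, ∑ i, δi i x = δstar x) ∧
        (∀ i, ∑ x, δi i x = C i) ∧
        (∀ i x, x ∉ Ai i → δi i x = 0) ∧
        (∀ i x, δstar x ≠ (Ai i).inf' (hAi i) δstar → δi i x = 0)) :
    -- δstar is leximin-maximal over charities among all decomposable distributions: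
    ∀ δ : A → ℝ, (∀ x, 0 ≤ δ x) → (∑ x, δ x = ∑ i, C i) →
      (∃ δi : N → A → ℝ, (∀ i x, 0 ≤ δi i x) ∧ (∀ x, ∑ i, δi i x = δ x) ∧
          (∀ i, ∑ x, δi i x = C i) ∧ (∀ i x, x ∉ Ai i → δi i x = 0)) →
      sortedVec δ = sortedVec δstar ∨ List.Lex (· < ·) (sortedVec δ) (sortedVec δstar) := by
  obtain ⟨δs, hs0, hscol, hsrow, hssupp, hseq⟩ := heq
  have hstar : IsDecomposition C Ai δstar δs := ⟨hs0, hscol, hsrow, hssupp⟩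
  rintro δ - - ⟨δi, hd : IsDecomposition C Ai δ δi⟩
  rcases trichotomous_of (List.Lex (· < ·)) (sortedVec δ) (sortedVec δstar) with h | h | h
  · exact Or.inr h
  · exact Or.inl h
  refine absurd h (List.not_lex_of_sum_take_le_sum_filter (pairwise_sortedVec δstar)
    (pairwise_sortedVec δ) (by simp only [length_sortedVec]) fun t => ?_)
  calc ((sortedVec δ).take ((sortedVec δstar).filter (· ≤ t)).length).sum
      = ((sortedVec δ).take #{x | δstar x ≤ t}).sum := by rw [length_filter_sortedVec]
    _ ≤ ∑ x with δstar x ≤ t, δ x := sum_take_sortedVec_le δ _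
    _ ≤ approvingBudget C Ai {x | δstar x ≤ t} := hd.sum_le_approvingBudget _
    _ = ∑ x with δstar x ≤ t, δstar x := (hstar.sum_lowerSet_eq_approvingBudget hAi hseq t).symm
    _ = ((sortedVec δstar).filter (· ≤ t)).sum := (sum_filter_sortedVec δstar t).symm

theorem stmt_15 {N A : Type*} [Fintype N] [Fintype A] [DecidableEq A]
    (C : N → ℝ) (hC : ∀ i, 0 ≤ C i)
    (Ai : N → Finset A) (hAi : ∀ i, (Ai i).Nonempty)
    (δstar : A → ℝ) (hδs : ∀ x, 0 ≤ δstar x) (hsum : ∑ x, δstar x = ∑ i, C i)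
    -- δstar is the equilibrium distribution: it has a decomposition in which each
    -- agent contributes only to approved charities achieving her minimum:
    (heq : ∃ δi : N → A → ℝ, (∀ i x, 0 ≤ δi i x) ∧ (∀ x, ∑ i, δi i x = δstar x) ∧
        (∀ i, ∑ x, δi i x = C i) ∧
        (∀ i x, x ∉ Ai i → δi i x = 0) ∧
        (∀ i x, δstar x ≠ (Ai i).inf' (hAi i) δstar → δi i x = 0)) :
    -- δstar is leximin-maximal over charities among all decomposable distributions:
    ∀ δ : A → ℝ, (∀ x, 0 ≤ δ x) → (∑ x, δ x = ∑ i, C i) →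
      (∃ δi : N → A → ℝ, (∀ i x, 0 ≤ δi i x) ∧ (∀ x, ∑ i, δi i x = δ x) ∧
          (∀ i, ∑ x, δi i x = C i) ∧ (∀ i x, x ∉ Ai i → δi i x = 0)) →
      sortedVec δ = sortedVec δstar ∨ List.Lex (· < ·) (sortedVec δ) (sortedVec δstar) :=
  stmt_15_general C Ai hAi δstar heq
end

section
/- With binary weights, a distribution δ is weakly decomposable if and only if for every level ℓ of the equilibrium partition, δ(∪_{k≥ℓ} X*_k) ≥ δ*(∪_{k≥ℓ} X*_k), where X*_1, …, X*_p partition the charities by their (increasing) equilibrium allocations. -/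
/-!
Both directions reduce to a transport problem between the contributions `C` and a
distribution, where agent `i` may only send mass to charities whose level is at least the level
of `u_i(δ*)`. In equilibrium every agent funds only charities of its own level, so the agents of
level `≥ ℓ` contribute exactly `δ*(X*_{≥ ℓ})`; in any admissible decomposition they fund only
charities of level `≥ ℓ`, which gives necessity. For sufficiency, sort agents and charities by
level, lay out their amounts as consecutive intervals tiling `[0, ∑ C)`, and let agent `i` give to
charity `x` the length of the overlap of their intervals. The tail inequality at the level of
`i` says that every charity of smaller level ends before the interval of `i` starts.
-/

open Finset MeasureTheory Function

section Tiling

variable {ι K : Type*} [Fintype ι] [LinearOrder K] (key : ι → K) (f : ι → ℝ)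

def tileStart (x : ι) : ℝ :=
  ∑ y ∈ univ.filter (fun y => key y < key x), f y

def tile (x : ι) : Set ℝ :=
  Set.Ico (tileStart key f x) (tileStart key f x + f x)

variable {key f}

lemma tileStart_nonneg (hf : ∀ x, 0 ≤ f x) (x : ι) : 0 ≤ tileStart key f x :=
  sum_nonneg fun y _ => hf y

lemma tileStart_add_self (hkey : Injective key) (x : ι) :
    tileStart key f x + f x = ∑ y ∈ univ.filter (fun y => key y ≤ key x), f y := by
  classical
  have : univ.filter (fun y => key y ≤ key x) = insert x (univ.filter fun y => key y < key x) := by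
    ext y
    simp [le_iff_lt_or_eq, hkey.eq_iff, or_comm]
  rw [this, sum_insert (by simp), add_comm, tileStart]

lemma tileStart_add_self_le (hkey : Injective key) (hf : ∀ x, 0 ≤ f x) {x y : ι}
    (hxy : key x < key y) : tileStart key f x + f x ≤ tileStart key f y := by
  rw [tileStart_add_self hkey]
  refine sum_le_sum_of_subset_of_nonneg (fun z hz => ?_) fun z _ _ => hf z
  rw [mem_filter] at hz ⊢
  exact ⟨hz.1, hz.2.trans_lt hxy⟩

lemma tileStart_add_self_le_sum (hkey : Injective key) (hf : ∀ x, 0 ≤ f x) (x : ι) :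
    tileStart key f x + f x ≤ ∑ y, f y := by
  rw [tileStart_add_self hkey]
  exact sum_le_univ_sum_of_nonneg hf

lemma pairwise_disjoint_tile (hkey : Injective key) (hf : ∀ x, 0 ≤ f x) :
    Pairwise (Disjoint on tile key f) := by
  intro x y hxy
  have of_lt {x y : ι} (h : key x < key y) : Disjoint (tile key f x) (tile key f y) :=
    Set.Ico_disjoint_Ico.2 (min_le_left _ _ |>.trans <| (tileStart_add_self_le hkey hf h).trans
      (le_max_right _ _))
  rcases lt_or_gt_of_ne (hkey.ne hxy) with h | h
  · exact of_lt h
  · exact (of_lt h).symm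

lemma volume_tile (x : ι) : volume (tile key f x) = ENNReal.ofReal (f x) := by
  rw [tile, Real.volume_Ico, add_sub_cancel_left]

lemma measureReal_tile (hf : ∀ x, 0 ≤ f x) (x : ι) : volume.real (tile key f x) = f x := by
  rw [measureReal_def, volume_tile, ENNReal.toReal_ofReal (hf x)]

lemma tile_subset_Ico (hkey : Injective key) (hf : ∀ x, 0 ≤ f x) (x : ι) :
    tile key f x ⊆ Set.Ico 0 (∑ y, f y) :=
  Set.Ico_subset_Ico (tileStart_nonneg hf x) (tileStart_add_self_le_sum hkey hf x)

lemma iUnion_tile_ae_eq (hkey : Injective key) (hf : ∀ x, 0 ≤ f x) :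
    (⋃ x, tile key f x) =ᵐ[volume] Set.Ico 0 (∑ x, f x) := by
  refine ae_eq_of_subset_of_measure_ge (Set.iUnion_subset (tile_subset_Ico hkey hf)) ?_
    (MeasurableSet.iUnion fun _ => measurableSet_Ico).nullMeasurableSet (by simp)
  rw [measure_iUnion (pairwise_disjoint_tile hkey hf) fun _ => measurableSet_Ico, tsum_fintype,
    Real.volume_Ico, sub_zero, ENNReal.ofReal_sum_of_nonneg fun x _ => hf x]
  simp only [volume_tile, le_rfl]

lemma sum_measureReal_inter_tile (hkey : Injective key) (hf : ∀ x, 0 ≤ f x)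
    {S : Set ℝ} (hS : MeasurableSet S) (hST : S ⊆ Set.Ico 0 (∑ x, f x)) :
    ∑ x, volume.real (S ∩ tile key f x) = volume.real S := by
  have hdisj : Pairwise (Disjoint on fun x => S ∩ tile key f x) := fun x y hxy =>
    (pairwise_disjoint_tile hkey hf hxy).mono Set.inter_subset_right Set.inter_subset_right
  have hfin (x : ι) : volume (S ∩ tile key f x) ≠ ⊤ :=
    ne_top_of_le_ne_top (by simp [volume_tile]) (measure_mono Set.inter_subset_right)
  rw [← measureReal_iUnion_fintype hdisj (fun _ => hS.inter measurableSet_Ico) hfin,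
    ← Set.inter_iUnion, measureReal_congr (ae_eq_set_inter (Filter.EventuallyEq.refl _ S)
      (iUnion_tile_ae_eq hkey hf)), Set.inter_eq_left.2 hST]

end Tiling

lemma exists_injective_key_of_lt {ι L : Type*} [Fintype ι] [LinearOrder L] (l : ι → L) :
    ∃ key : ι → L ×ₗ Fin (Fintype.card ι), Injective key ∧ ∀ i j, l i < l j → key i < key j :=
  ⟨fun i => toLex (l i, Fintype.equivFin ι i),
    fun _ _ h => (Fintype.equivFin ι).injective (congrArg (fun z => (ofLex z).2) h),
    fun _ _ h => Prod.Lex.lt_iff.2 (Or.inl h)⟩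

section Coupling

variable {ι κ L : Type*} [Fintype ι] [Fintype κ] [LinearOrder L]
  {f : ι → ℝ} {g : κ → ℝ} {lf : ι → L} {lg : κ → L}

lemma sum_tail_le_of_coupling {M : ι → κ → ℝ} (hM : ∀ i x, 0 ≤ M i x)
    (hcol : ∀ x, ∑ i, M i x = g x) (hrow : ∀ i, ∑ x, M i x = f i)
    (hsupp : ∀ i x, M i x ≠ 0 → lf i ≤ lg x) (ℓ : L) :
    ∑ i ∈ univ.filter (fun i => ℓ ≤ lf i), f i ≤ ∑ x ∈ univ.filter (fun x => ℓ ≤ lg x), g x := by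
  have hrow' (i : ι) (hi : ℓ ≤ lf i) : ∑ x ∈ univ.filter (fun x => ℓ ≤ lg x), M i x = f i := by
    rw [sum_filter_of_ne fun x _ hx => hi.trans (hsupp i x hx), hrow]
  calc ∑ i ∈ univ.filter (fun i => ℓ ≤ lf i), f i
      = ∑ i ∈ univ.filter (fun i => ℓ ≤ lf i), ∑ x ∈ univ.filter (fun x => ℓ ≤ lg x), M i x :=
        sum_congr rfl fun i hi => (hrow' i (mem_filter.1 hi).2).symm
    _ ≤ ∑ i, ∑ x ∈ univ.filter (fun x => ℓ ≤ lg x), M i x :=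
        sum_le_univ_sum_of_nonneg fun i => sum_nonneg fun x _ => hM i x
    _ = ∑ x ∈ univ.filter (fun x => ℓ ≤ lg x), g x := by
        rw [sum_comm]
        exact sum_congr rfl fun x _ => hcol x

lemma sum_tail_eq_of_coupling {M : ι → κ → ℝ} (hM : ∀ i x, 0 ≤ M i x)
    (hcol : ∀ x, ∑ i, M i x = g x) (hrow : ∀ i, ∑ x, M i x = f i)
    (hsupp : ∀ i x, M i x ≠ 0 → lf i = lg x) (ℓ : L) :
    ∑ i ∈ univ.filter (fun i => ℓ ≤ lf i), f i = ∑ x ∈ univ.filter (fun x => ℓ ≤ lg x), g x :=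
  le_antisymm (sum_tail_le_of_coupling hM hcol hrow (fun i x h => (hsupp i x h).le) ℓ)
    (sum_tail_le_of_coupling (M := fun x i => M i x) (fun x i => hM i x) hrow hcol
      (fun x i h => (hsupp i x h).ge) ℓ)

lemma tileStart_add_self_le_tileStart {K K' : Type*} [LinearOrder K] [LinearOrder K']
    {kf : ι → K} {kg : κ → K'} (hkf : ∀ i j, lf i < lf j → kf i < kf j) (hkg_inj : Injective kg)
    (hkg : ∀ x y, lg x < lg y → kg x < kg y) (hf : ∀ i, 0 ≤ f i) (hg : ∀ x, 0 ≤ g x)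
    (hsum : ∑ i, f i = ∑ x, g x) {i : ι}
    (htail : ∑ j ∈ univ.filter (fun j => lf i ≤ lf j), f j ≤
      ∑ y ∈ univ.filter (fun y => lf i ≤ lg y), g y) {x : κ} (hx : lg x < lf i) :
    tileStart kg g x + g x ≤ tileStart kf f i := by
  have hg_head : tileStart kg g x + g x ≤ ∑ y ∈ univ.filter (fun y => ¬ lf i ≤ lg y), g y := by
    rw [tileStart_add_self hkg_inj]
    refine sum_le_sum_of_subset_of_nonneg (fun y hy => ?_) fun y _ _ => hg y
    rw [mem_filter] at hy ⊢
    exact ⟨hy.1, fun h => (hkg x y (hx.trans_le h)).not_ge hy.2⟩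
  have hf_head : ∑ j ∈ univ.filter (fun j => ¬ lf i ≤ lf j), f j ≤ tileStart kf f i := by
    refine sum_le_sum_of_subset_of_nonneg (fun j hj => ?_) fun j _ _ => hf j
    rw [mem_filter] at hj ⊢
    exact ⟨hj.1, hkf j i (not_le.1 hj.2)⟩
  have hg_split := sum_filter_add_sum_filter_not univ (fun y => lf i ≤ lg y) g
  have hf_split := sum_filter_add_sum_filter_not univ (fun j => lf i ≤ lf j) f
  linarith

theorem exists_coupling_of_sum_tail_le (hf : ∀ i, 0 ≤ f i) (hg : ∀ x, 0 ≤ g x)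
    (hsum : ∑ i, f i = ∑ x, g x)
    (htail : ∀ ℓ, ∑ i ∈ univ.filter (fun i => ℓ ≤ lf i), f i ≤
      ∑ x ∈ univ.filter (fun x => ℓ ≤ lg x), g x) :
    ∃ M : ι → κ → ℝ, (∀ i x, 0 ≤ M i x) ∧ (∀ x, ∑ i, M i x = g x) ∧
      (∀ i, ∑ x, M i x = f i) ∧ (∀ i x, M i x ≠ 0 → lf i ≤ lg x) := by
  obtain ⟨kf, hkf_inj, hkf⟩ := exists_injective_key_of_lt lf
  obtain ⟨kg, hkg_inj, hkg⟩ := exists_injective_key_of_lt lg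
  refine ⟨fun i x => volume.real (tile kf f i ∩ tile kg g x), fun _ _ => measureReal_nonneg,
    fun x => ?_, fun i => ?_, fun i x hne => ?_⟩
  · simp_rw [Set.inter_comm (tile kf f _)]
    rw [sum_measureReal_inter_tile (S := tile kg g x) hkf_inj hf measurableSet_Ico
      (hsum ▸ tile_subset_Ico hkg_inj hg x), measureReal_tile hg]
  · rw [sum_measureReal_inter_tile (S := tile kf f i) hkg_inj hg measurableSet_Ico
      (hsum ▸ tile_subset_Ico hkf_inj hf i), measureReal_tile hf]
  · by_contra hlt
    have hsep := tileStart_add_self_le_tileStart hkf hkg_inj hkg hf hg hsum (htail (lf i))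
      (not_le.1 hlt)
    have hdisj : Disjoint (tile kf f i) (tile kg g x) :=
      Set.Ico_disjoint_Ico.2 (min_le_right _ _ |>.trans <| hsep.trans (le_max_left _ _))
    exact hne (by simp only [hdisj.inter_eq, measureReal_empty])

theorem exists_coupling_iff_sum_tail_le (hf : ∀ i, 0 ≤ f i) (hg : ∀ x, 0 ≤ g x)
    (hsum : ∑ i, f i = ∑ x, g x) :
    (∃ M : ι → κ → ℝ, (∀ i x, 0 ≤ M i x) ∧ (∀ x, ∑ i, M i x = g x) ∧
      (∀ i, ∑ x, M i x = f i) ∧ (∀ i x, M i x ≠ 0 → lf i ≤ lg x)) ↔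
    ∀ ℓ, ∑ i ∈ univ.filter (fun i => ℓ ≤ lf i), f i ≤
      ∑ x ∈ univ.filter (fun x => ℓ ≤ lg x), g x :=
  ⟨fun ⟨_, hM, hcol, hrow, hsupp⟩ => sum_tail_le_of_coupling hM hcol hrow hsupp,
    exists_coupling_of_sum_tail_le hf hg hsum⟩

end Coupling

theorem stmt_17_general {N A : Type*} [Fintype N] [Fintype A] [DecidableEq A]
    (C : N → ℝ) (hC : ∀ i, 0 ≤ C i)
    (Ai : N → Finset A) (hAi : ∀ i, (Ai i).Nonempty)
    (δstar : A → ℝ)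
    -- δstar is the equilibrium distribution:
    (heq : ∃ δi : N → A → ℝ, (∀ i x, 0 ≤ δi i x) ∧ (∀ x, ∑ i, δi i x = δstar x) ∧
        (∀ i, ∑ x, δi i x = C i) ∧
        (∀ i x, x ∉ Ai i → δi i x = 0) ∧
        (∀ i x, δstar x ≠ (Ai i).inf' (hAi i) δstar → δi i x = 0))
    -- the partition X*_1, …, X*_p of the charities by equilibrium amounts w*_1 < … < w*_p:
    (p : ℕ) (X : Fin p → Finset A) (w : Fin p → ℝ)
    (hpart : ∀ x : A, ∃! k : Fin p, x ∈ X k)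
    (hlevel : ∀ k, ∀ x ∈ X k, δstar x = w k)
    (hmono : StrictMono w)
    (δ : A → ℝ) (hδ : ∀ x, 0 ≤ δ x) (hsum2 : ∑ x, δ x = ∑ i, C i) :
    -- δ is weakly decomposable iff every tail of the partition gets at least as much as in δstar:
    (∃ δi : N → A → ℝ, (∀ i x, 0 ≤ δi i x) ∧ (∀ x, ∑ i, δi i x = δ x) ∧
        (∀ i, ∑ x, δi i x = C i) ∧
        (∀ i x, δi i x ≠ 0 → (Ai i).inf' (hAi i) δstar ≤ δstar x))
    ↔ (∀ ℓ : Fin p,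
        ∑ x ∈ (Finset.univ.filter fun k => ℓ ≤ k).biUnion X, δstar x ≤
          ∑ x ∈ (Finset.univ.filter fun k => ℓ ≤ k).biUnion X, δ x) := by
  choose lx hlx using fun x => (hpart x).exists
  have hδstar (x : A) : δstar x = w (lx x) := hlevel _ x (hlx x)
  have hlevel_inf' (i : N) : ∃ k, w k = (Ai i).inf' (hAi i) δstar :=
    let ⟨y, _, hy⟩ := exists_mem_eq_inf' (hAi i) δstar
    ⟨lx y, (hδstar y).symm.trans hy.symm⟩
  choose li hli using hlevel_inf'
  have hsupp_iff (i : N) (x : A) : (Ai i).inf' (hAi i) δstar ≤ δstar x ↔ li i ≤ lx x := by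
    rw [← hli i, hδstar, hmono.le_iff_le]
  have htail (ℓ : Fin p) :
      (univ.filter fun k => ℓ ≤ k).biUnion X = univ.filter fun x => ℓ ≤ lx x := by
    ext x
    simp only [mem_biUnion, mem_filter, mem_univ, true_and]
    exact ⟨fun ⟨k, hk, hxk⟩ => (hpart x).unique hxk (hlx x) ▸ hk, fun h => ⟨lx x, h, hlx x⟩⟩
  obtain ⟨ε, hε, hεcol, hεrow, -, hεsupp⟩ := heq
  have hequil (ℓ : Fin p) : ∑ i ∈ univ.filter (fun i => ℓ ≤ li i), C i =
      ∑ x ∈ univ.filter (fun x => ℓ ≤ lx x), δstar x :=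
    sum_tail_eq_of_coupling hε hεcol hεrow (fun i x h => hmono.injective <| by
      rw [hli, ← hδstar]; exact (not_imp_comm.1 (hεsupp i x) h).symm) ℓ
  simp only [hsupp_iff, htail, ← hequil]
  exact exists_coupling_iff_sum_tail_le hC hδ hsum2.symm

theorem stmt_17 {N A : Type*} [Fintype N] [Fintype A] [DecidableEq A]
    (C : N → ℝ) (hC : ∀ i, 0 ≤ C i)
    (Ai : N → Finset A) (hAi : ∀ i, (Ai i).Nonempty)
    (δstar : A → ℝ) (hδs : ∀ x, 0 ≤ δstar x) (hsum : ∑ x, δstar x = ∑ i, C i)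
    -- δstar is the equilibrium distribution:
    (heq : ∃ δi : N → A → ℝ, (∀ i x, 0 ≤ δi i x) ∧ (∀ x, ∑ i, δi i x = δstar x) ∧
        (∀ i, ∑ x, δi i x = C i) ∧
        (∀ i x, x ∉ Ai i → δi i x = 0) ∧
        (∀ i x, δstar x ≠ (Ai i).inf' (hAi i) δstar → δi i x = 0))
    -- the partition X*_1, …, X*_p of the charities by equilibrium amounts w*_1 < … < w*_p:
    (p : ℕ) (X : Fin p → Finset A) (w : Fin p → ℝ)
    (hpart : ∀ x : A, ∃! k : Fin p, x ∈ X k)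
    (hXne : ∀ k, (X k).Nonempty)
    (hlevel : ∀ k, ∀ x ∈ X k, δstar x = w k)
    (hmono : StrictMono w)
    (δ : A → ℝ) (hδ : ∀ x, 0 ≤ δ x) (hsum2 : ∑ x, δ x = ∑ i, C i) :
    -- δ is weakly decomposable iff every tail of the partition gets at least as much as in δstar:
    (∃ δi : N → A → ℝ, (∀ i x, 0 ≤ δi i x) ∧ (∀ x, ∑ i, δi i x = δ x) ∧
        (∀ i, ∑ x, δi i x = C i) ∧
        (∀ i x, δi i x ≠ 0 → (Ai i).inf' (hAi i) δstar ≤ δstar x))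
    ↔ (∀ ℓ : Fin p,
        ∑ x ∈ (Finset.univ.filter fun k => ℓ ≤ k).biUnion X, δstar x ≤
          ∑ x ∈ (Finset.univ.filter fun k => ℓ ≤ k).biUnion X, δ x) :=
  stmt_17_general C hC Ai hAi δstar heq p X w hpart hlevel hmono δ hδ hsum2
end

section
/- In the best-response redistribution dynamics, the potential Φ(δ_1,…,δ_n) := ∑_i ∑_{x∈A_i} δ_i(x)·log(v_{i,x}/δ(x)) strictly increases after a single elementary transfer: if an agent i transfers ε > 0 from charity x to charity y where δ(x)/v_{i,x} > δ(y)/v_{i,y} and (δ(x)−ε)/v_{i,x} ≥ (δ(y)+ε)/v_{i,y} (and δ_i(x) ≥ ε), then Φ after the transfer is strictly greater than Φ before. -/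
/-!
Write `δ(x) = ∑ⱼ δⱼ(x)` and `η(t) = -t log t`. Since terms with `δᵢ(x) = 0` vanish,
`Φ = ∑ᵢ ∑ₓ δᵢ(x) log v_{i,x} + ∑ₓ η(δ(x))`. A transfer of `ε` by agent `i` from `x` to `y`
changes the first sum by `ε (log v_{i,y} - log v_{i,x})` and the second only at `x` and `y`.
The tangent lines of the strictly concave `η` at `δ(x) - ε` and `δ(y) + ε` make the entropy gain
strictly larger than `ε (log (δ(x) - ε) - log (δ(y) + ε))`, so `Φ` grows by more than
`ε (log ((δ(x) - ε) / v_{i,x}) - log ((δ(y) + ε) / v_{i,y})) ≥ 0`.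
-/

open Finset

/-- The potential function `Φ(δ_1,…,δ_n) = ∑_i ∑_{x ∈ A_i} δ_i(x) log(v_{i,x}/δ(x))`. -/
noncomputable def potential {N A : Type*} [Fintype N] [Fintype A]
    (v : N → A → ℝ) (δi : N → A → ℝ) : ℝ :=
  ∑ i, ∑ x ∈ Finset.univ.filter (fun x => 0 < v i x),
    δi i x * Real.log (v i x / ∑ j, δi j x)

open Real

lemma negMulLog_lt_tangent {s t : ℝ} (hs : 0 < s) (ht : 0 ≤ t) (hts : t ≠ s) :
    negMulLog t < negMulLog s - (t - s) * (log s + 1) := by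
  have hscale : negMulLog t = t / s * negMulLog s + s * negMulLog (t / s) := by
    rw [← negMulLog_mul, mul_div_cancel₀ t hs.ne']
  have hlt : negMulLog (t / s) < 1 - t / s :=
    negMulLog_lt_one_sub_self (by positivity) (by rwa [ne_eq, div_eq_one_iff_eq hs.ne'])
  rw [hscale]
  calc t / s * negMulLog s + s * negMulLog (t / s)
      < t / s * negMulLog s + s * (1 - t / s) := by gcongr
    _ = negMulLog s - (t - s) * (log s + 1) := by
      simp only [negMulLog]; field_simp; ring

lemma negMulLog_transfer_gain_pos {a b p q ε : ℝ} (hp : 0 < p) (hq : 0 < q) (hb : 0 ≤ b)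
    (hε : 0 < ε) (haε : 0 < a - ε) (h : (b + ε) / q ≤ (a - ε) / p) :
    0 < ε * log q - ε * log p + (negMulLog (a - ε) - negMulLog a)
      + (negMulLog (b + ε) - negMulLog b) := by
  have htangent_x := negMulLog_lt_tangent haε (by linarith) (show a ≠ a - ε by linarith)
  have htangent_y := negMulLog_lt_tangent (show 0 < b + ε by linarith) hb (show b ≠ b + ε by linarith)
  have hlog : log (b + ε) - log q ≤ log (a - ε) - log p := by
    rw [← log_div (by linarith) hq.ne', ← log_div haε.ne' hp.ne']
    exact log_le_log (by positivity) h
  linarith [mul_le_mul_of_nonneg_left hlog hε.le]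

section Transfer

variable {N A : Type*} [DecidableEq N] [DecidableEq A]

def transfer (d : N → A → ℝ) (i : N) (x y : A) (ε : ℝ) (j : N) (a : A) : ℝ :=
  d j a + if j = i then (if a = y then ε else 0) - (if a = x then ε else 0) else 0

lemma ite_update_eq_transfer (d : N → A → ℝ) (i : N) {x y : A} (ε : ℝ) (hxy : x ≠ y) :
    (fun j => if j = i then
        Function.update (Function.update (d i) x (d i x - ε)) y (d i y + ε)
      else d j) = transfer d i x y ε := by
  funext j a
  by_cases hj : j = i
  · subst hj
    rcases eq_or_ne a y with rfl | hay
    · simp [transfer, hxy.symm]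
    rcases eq_or_ne a x with rfl | hax
    · simp [transfer, hay, sub_eq_add_neg]
    · simp [transfer, hax, hay]
  · simp [transfer, hj]

lemma transfer_nonneg {d : N → A → ℝ} (hd : ∀ j a, 0 ≤ d j a) {i : N} {x y : A} {ε : ℝ}
    (hε : 0 ≤ ε) (hεle : ε ≤ d i x) (j : N) (a : A) : 0 ≤ transfer d i x y ε j a := by
  have := hd j a
  simp only [transfer]
  split_ifs <;> subst_vars <;> linarith

lemma pos_of_transfer_pos {v d : N → A → ℝ} (hsupp : ∀ j a, 0 < d j a → 0 < v j a) {i : N}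
    {x y : A} {ε : ℝ} (hε : 0 ≤ ε) (hvy : 0 < v i y) (j : N) (a : A)
    (hpos : 0 < transfer d i x y ε j a) : 0 < v j a := by
  simp only [transfer] at hpos
  split_ifs at hpos <;> subst_vars <;> first | exact hvy | exact hsupp _ _ (by linarith)

variable [Fintype N]

lemma sum_transfer_apply (d : N → A → ℝ) (i : N) (x y : A) (ε : ℝ) (a : A) :
    ∑ j, transfer d i x y ε j a
      = ∑ j, d j a + ((if a = y then ε else 0) - (if a = x then ε else 0)) := by
  simp [transfer, sum_add_distrib]

variable [Fintype A]

lemma sum_sum_transfer_mul (d w : N → A → ℝ) (i : N) (x y : A) (ε : ℝ) :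
    ∑ j, ∑ a, transfer d i x y ε j a * w j a
      = ∑ j, ∑ a, d j a * w j a + (ε * w i y - ε * w i x) := by
  simp [transfer, add_mul, sum_add_distrib, sub_mul, sum_sub_distrib, ite_mul]

end Transfer

section Potential

variable {N A : Type*} [Fintype N] [Fintype A]

theorem potential_eq_sum_mul_log_add_sum_negMulLog {v d : N → A → ℝ}
    (hd : ∀ i a, 0 ≤ d i a) (hsupp : ∀ i a, 0 < d i a → 0 < v i a) :
    potential v d = ∑ i, ∑ a, d i a * log (v i a) + ∑ a, negMulLog (∑ j, d j a) := by
  have hterm : ∀ i a, (if 0 < v i a then d i a * log (v i a / ∑ j, d j a) else 0)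
      = d i a * log (v i a) - d i a * log (∑ j, d j a) := by
    intro i a
    rcases (hd i a).eq_or_lt with hzero | hpos
    · simp [← hzero]
    have hv := hsupp i a hpos
    have hD : 0 < ∑ j, d j a :=
      hpos.trans_le (single_le_sum (fun j _ => hd j a) (mem_univ i))
    rw [if_pos hv, log_div hv.ne' hD.ne']
    ring
  simp only [potential, sum_filter, hterm, sum_sub_distrib]
  rw [sum_comm (f := fun i a => d i a * log (∑ j, d j a))]
  simp only [← sum_mul, negMulLog, neg_mul, sum_neg_distrib, sub_eq_add_neg]

theorem potential_transfer_sub_potential [DecidableEq N] [DecidableEq A] {v d : N → A → ℝ}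
    (hd : ∀ i a, 0 ≤ d i a) (hsupp : ∀ i a, 0 < d i a → 0 < v i a) {i : N} {x y : A}
    (hxy : x ≠ y) {ε : ℝ} (hε : 0 ≤ ε) (hεle : ε ≤ d i x) (hvy : 0 < v i y) :
    potential v (transfer d i x y ε) - potential v d
      = ε * log (v i y) - ε * log (v i x)
        + (negMulLog (∑ j, d j x - ε) - negMulLog (∑ j, d j x))
        + (negMulLog (∑ j, d j y + ε) - negMulLog (∑ j, d j y)) := by
  have hentropy : ∑ a, negMulLog (∑ j, transfer d i x y ε j a) - ∑ a, negMulLog (∑ j, d j a)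
      = (negMulLog (∑ j, d j x - ε) - negMulLog (∑ j, d j x))
        + (negMulLog (∑ j, d j y + ε) - negMulLog (∑ j, d j y)) := by
    rw [← sum_sub_distrib, Fintype.sum_eq_add x y hxy]
    · simp [sum_transfer_apply, hxy, hxy.symm, sub_eq_add_neg]
    · rintro a ⟨hax, hay⟩
      simp [sum_transfer_apply, hax, hay]
  rw [potential_eq_sum_mul_log_add_sum_negMulLog (transfer_nonneg hd hε hεle)
      (pos_of_transfer_pos hsupp hε hvy), potential_eq_sum_mul_log_add_sum_negMulLog hd hsupp,
    sum_sum_transfer_mul]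
  linarith

end Potential

theorem stmt_18_general {N A : Type*} [Fintype N] [DecidableEq N] [Fintype A] [DecidableEq A]
    (v : N → A → ℝ)
    (δi : N → A → ℝ) (hδi : ∀ i x, 0 ≤ δi i x)
    (hsupp : ∀ i x, 0 < δi i x → 0 < v i x)
    (i₀ : N) (x y : A) (hvx : 0 < v i₀ x) (hvy : 0 < v i₀ y)
    (ε : ℝ) (hε : 0 < ε) (hεle : ε ≤ δi i₀ x)
    (hratio : (∑ j, δi j y) / v i₀ y < (∑ j, δi j x) / v i₀ x)
    (hratio' : ((∑ j, δi j y) + ε) / v i₀ y ≤ ((∑ j, δi j x) - ε) / v i₀ x) :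
    potential v δi <
      potential v (fun j =>
        if j = i₀ then
          Function.update (Function.update (δi i₀) x (δi i₀ x - ε)) y (δi i₀ y + ε)
        else δi j) := by
  have hxy : x ≠ y := by
    rintro rfl
    exact lt_irrefl _ hratio
  have hDy : 0 ≤ ∑ j, δi j y := sum_nonneg fun j _ => hδi j y
  have hgap : 0 < ∑ j, δi j x - ε :=
    pos_of_mul_pos_left ((div_pos (by linarith) hvy).trans_le hratio') (inv_pos.mpr hvx).le
  rw [ite_update_eq_transfer δi i₀ ε hxy, ← sub_pos,
    potential_transfer_sub_potential hδi hsupp hxy hε.le hεle hvy]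
  exact negMulLog_transfer_gain_pos hvx hvy hDy hε hgap hratio'

theorem stmt_18 {N A : Type*} [Fintype N] [DecidableEq N] [Fintype A] [DecidableEq A]
    (v : N → A → ℝ) (hv : ∀ i x, 0 ≤ v i x)
    (δi : N → A → ℝ) (hδi : ∀ i x, 0 ≤ δi i x)
    (hsupp : ∀ i x, 0 < δi i x → 0 < v i x)
    (i₀ : N) (x y : A) (hvx : 0 < v i₀ x) (hvy : 0 < v i₀ y)
    (hδx : 0 < ∑ j, δi j x) (hδy : 0 < ∑ j, δi j y)
    (hδix : 0 < δi i₀ x)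
    (ε : ℝ) (hε : 0 < ε) (hεle : ε ≤ δi i₀ x)
    (hratio : (∑ j, δi j y) / v i₀ y < (∑ j, δi j x) / v i₀ x)
    (hratio' : ((∑ j, δi j y) + ε) / v i₀ y ≤ ((∑ j, δi j x) - ε) / v i₀ x) :
    potential v δi <
      potential v (fun j =>
        if j = i₀ then
          Function.update (Function.update (δi i₀) x (δi i₀ x - ε)) y (δi i₀ y + ε)
        else δi j) :=
  stmt_18_general v δi hδi hsupp i₀ x y hvx hvy ε hε hεle hratio hratio'
end
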